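/- arXiv:2507.09321 — 2 statements merged into one kernel-verified Lean document; each statement's English description precedes it below -/
import Mathlib

section
/- For every ν ∈ ℕ, T > 0 and d ∈ ℕ there exists a constant C = C(ν, T, d) > 0 such that for all γ, γ̃ ∈ H, sup_{0 ≤ t ≤ T} |Φ^(ν)(γ)(t) − Φ^(ν)(γ̃)(t)| ≤ C (sup_{0 ≤ t ≤ T} |γ(t) − γ̃(t)|)^{1/2}; that is, Φ^(ν) : H → C([0,T]; ℝ^{d^ν}) is 1/2-Hölder continuous with respect to the supremum norms. -/
open MeasureTheory Filter Set
open Topology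

/-- The simplex `{u : 0 ≤ u 0 ≤ u 1 ≤ ⋯ ≤ u (ν-1) ≤ r}` in `ℝ^ν`. -/
def simplexSet (ν : ℕ) (r : ℝ) : Set (Fin ν → ℝ) :=
  {u | (∀ j, 0 ≤ u j) ∧ Monotone u ∧ ∀ j, u j ≤ r}

/-- The iterated integral map `Φ^(ν)`, coordinatewise:
`(Φ^(ν)(γ)(s))_{i_1,…,i_ν} = ∫_{0 ≤ u_1 ≤ ⋯ ≤ u_ν ≤ s} γ̇_{i_1}(u_1) ⋯ γ̇_{i_ν}(u_ν) du`. -/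
noncomputable def Phi (d ν : ℕ) (γ : ℝ → Fin d → ℝ) (s : ℝ) : (Fin ν → Fin d) → ℝ :=
  fun i => ∫ u in simplexSet ν s, ∏ j, deriv (fun v => γ v (i j)) (u j)

/-- Membership in `H`: paths `γ` with `γ(0) = 0` that are Lipschitz with constant 1
on `[0,T]`. -/
def HPath (d : ℕ) (T : ℝ) (γ : ℝ → Fin d → ℝ) : Prop :=
  γ 0 = 0 ∧ LipschitzOnWith 1 γ (Set.Icc 0 T)

lemma lipschitz_integral_deriv (g : ℝ → ℝ) (hg : LipschitzWith 1 g) {a b : ℝ} (hab : a ≤ b) :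
    ∫ x in Set.Ioc a b, deriv g x = g b - g a := by
  have habs : ∀ x y : ℝ, |g x - g y| ≤ |x - y| := by
    intro x y
    have := hg.dist_le_mul x y
    simpa [Real.dist_eq] using this
  set f : ℝ → ℝ := fun x => g x + x with hf
  have hfm : Monotone f := by
    intro x y hxy
    have h2 : |x - y| = y - x := by rw [abs_sub_comm, abs_of_nonneg (by linarith)]
    have h1 := (abs_le.1 (habs x y)).2
    simp only [hf]
    linarith
  have hfc : Continuous f := (hg.continuous.add continuous_id)
  set sf := hfm.stieltjesFunction with hsfdef
  have hsf : ∀ x, sf x = f x := by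
    intro x
    rw [hsfdef, hfm.stieltjesFunction_eq x]
    exact rightLim_eq_of_tendsto
      (hfc.continuousAt.continuousWithinAt)
  set μ := sf.measure with hμdef
  have hμIoc : ∀ x y : ℝ, μ (Set.Ioc x y) = ENNReal.ofReal (f y - f x) := by
    intro x y; rw [hμdef, sf.measure_Ioc, hsf, hsf]
  -- second monotone function
  set h : ℝ → ℝ := fun x => x - g x with hh
  have hhm : Monotone h := by
    intro x y hxy
    have h2 : |y - x| = y - x := by rw [abs_of_nonneg (by linarith)]
    have h1 := (abs_le.1 (habs y x)).2
    simp only [hh]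
    linarith
  set sh := hhm.stieltjesFunction with hshdef
  have hsh : ∀ x, sh x = h x := by
    intro x
    rw [hshdef, hhm.stieltjesFunction_eq x]
    exact rightLim_eq_of_tendsto
      ((continuous_id.sub hg.continuous).continuousAt.continuousWithinAt)
  set ν' := sh.measure with hν'def
  have hlocfin : IsLocallyFiniteMeasure (μ + ν') := by
    constructor
    intro x
    rcases μ.finiteAt_nhds x with ⟨s, hs, h1⟩
    rcases ν'.finiteAt_nhds x with ⟨s', hs', h1'⟩
    refine ⟨s ∩ s', Filter.inter_mem hs hs', ?_⟩
    rw [Measure.add_apply]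
    exact ENNReal.add_lt_top.2 ⟨lt_of_le_of_lt (measure_mono inter_subset_left) h1,
      lt_of_le_of_lt (measure_mono inter_subset_right) h1'⟩
  have hsum : μ + ν' = volume + volume := by
    refine MeasureTheory.Measure.ext_of_Ioc _ _ (fun x y hxy => ?_)
    rw [Measure.add_apply, Measure.add_apply, hμIoc, hν'def, sh.measure_Ioc, hsh, hsh,
      Real.volume_Ioc]
    rw [← ENNReal.ofReal_add (sub_nonneg.2 (hfm hxy.le)) (sub_nonneg.2 (hhm hxy.le)),
      ← ENNReal.ofReal_add (by linarith [hxy.le]) (by linarith [hxy.le])]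
    congr 1
    simp only [hf, hh]
    ring
  have hle : μ ≤ volume + volume := by
    rw [← hsum]; exact Measure.le_add_right le_rfl
  have hac : μ ≪ (volume : Measure ℝ) := by
    refine Measure.AbsolutelyContinuous.mk (fun s hs h0 => ?_)
    have := hle s
    rw [Measure.add_apply, h0] at this
    simpa using this
  have hder := hfm.ae_hasDerivAt
  have hae : ∀ᵐ x, deriv g x = (μ.rnDeriv volume x).toReal - 1 := by
    filter_upwards [hder] with x hx
    have : HasDerivAt g ((μ.rnDeriv volume x).toReal - 1) x := by
      have := hx.sub (hasDerivAt_id x)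
      exact this.congr_of_eventuallyEq (Filter.Eventually.of_forall fun y => by simp [hf])
    exact this.deriv
  have hμfin : μ (Set.Ioc a b) ≠ ⊤ := by rw [hμIoc]; exact ENNReal.ofReal_ne_top
  calc ∫ x in Set.Ioc a b, deriv g x
      = ∫ x in Set.Ioc a b, ((μ.rnDeriv volume x).toReal - 1) :=
        integral_congr_ae (ae_restrict_of_ae hae)
    _ = (∫ x in Set.Ioc a b, (μ.rnDeriv volume x).toReal) - ∫ _x in Set.Ioc a b, (1:ℝ) :=
        integral_sub (Measure.integrableOn_toReal_rnDeriv hμfin)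
          (integrableOn_const (by rw [Real.volume_Ioc]; exact ENNReal.ofReal_ne_top))
    _ = (μ (Set.Ioc a b)).toReal - (b - a) := by
        rw [Measure.setIntegral_toReal_rnDeriv hac, setIntegral_const]
        simp [Real.volume_Ioc, ENNReal.toReal_ofReal (sub_nonneg.2 hab), measureReal_def, max_eq_left (sub_nonneg.2 hab)]
    _ = g b - g a := by
        rw [hμIoc, ENNReal.toReal_ofReal (sub_nonneg.2 (hfm hab))]
        simp only [hf]
        ring



lemma ae_ne_ (T : ℝ) : ∀ᵐ x : ℝ, x ≠ T := by
  refine ae_iff.2 ?_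
  have : {x : ℝ | ¬ x ≠ T} = {T} := by ext x; simp
  rw [this]
  exact measure_singleton T

lemma lipschitzOn_integral_deriv {T : ℝ} (φ : ℝ → ℝ)
    (hφ : LipschitzOnWith 1 φ (Set.Icc 0 T)) {a b : ℝ} (ha : 0 ≤ a) (hab : a ≤ b) (hbT : b ≤ T) :
    ∫ x in Set.Ioc a b, deriv φ x = φ b - φ a := by
  obtain ⟨g, hg, hgeq⟩ := hφ.extend_real
  have hderiv_eq : ∀ u ∈ Set.Ioo (0:ℝ) T, deriv φ u = deriv g u := by
    intro u hu
    have hmem : Set.Icc (0:ℝ) T ∈ 𝓝 u := Icc_mem_nhds hu.1 hu.2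
    have heq : φ =ᶠ[𝓝 u] g := by
      filter_upwards [hmem] with x hx using hgeq hx
    exact heq.deriv_eq
  have h1 : ∫ x in Set.Ioc a b, deriv φ x = ∫ x in Set.Ioc a b, deriv g x := by
    refine integral_congr_ae ?_
    filter_upwards [ae_restrict_of_ae (ae_ne_ T), ae_restrict_mem measurableSet_Ioc]
      with x hx hx2
    exact hderiv_eq x ⟨lt_of_le_of_lt ha hx2.1, lt_of_le_of_ne (hx2.2.trans hbT) hx⟩
  rw [h1, lipschitz_integral_deriv g hg hab, hgeq ⟨ha.trans hab, hbT⟩, hgeq ⟨ha, hab.trans hbT⟩]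

lemma deriv_le_one {T : ℝ} (φ : ℝ → ℝ) (hφ : LipschitzOnWith 1 φ (Set.Icc 0 T))
    {u : ℝ} (hu : u ∈ Set.Ioo (0:ℝ) T) : |deriv φ u| ≤ 1 := by
  have := norm_deriv_le_of_lipschitzOn (𝕜 := ℝ) (Icc_mem_nhds hu.1 hu.2) hφ
  simpa using this

lemma tele {n : ℕ} (a b : Fin n → ℝ) :
    ∏ j, a j - ∏ j, b j =
      ∑ k : Fin n, ∏ j, (if j < k then a j else if j = k then a j - b j else b j) := by
  induction n with
  | zero => simp
  | succ n ih =>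
    rw [Fin.prod_univ_castSucc a, Fin.prod_univ_castSucc b, Fin.sum_univ_castSucc]
    have hlast : ∏ j : Fin (n+1),
        (if j < Fin.last n then a j else if j = Fin.last n then a j - b j else b j) =
        (∏ j : Fin n, a j.castSucc) * (a (Fin.last n) - b (Fin.last n)) := by
      rw [Fin.prod_univ_castSucc]
      congr 1
      · exact Finset.prod_congr rfl fun j _ => by
          simp [Fin.castSucc_lt_last j]
      · simp
    have hcast : ∀ k : Fin n, ∏ j : Fin (n+1),
        (if j < k.castSucc then a j else if j = k.castSucc then a j - b j else b j) =
        (∏ j : Fin n, (if j < k then a j.castSucc else if j = k then a j.castSucc - b j.castSucc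
          else b j.castSucc)) * b (Fin.last n) := by
      intro k
      rw [Fin.prod_univ_castSucc]
      congr 1
      · refine Finset.prod_congr rfl fun j _ => ?_
        simp only [Fin.castSucc_lt_castSucc_iff, Fin.castSucc_inj]
      · have h1 : ¬ (Fin.last n < k.castSucc) := by
          exact not_lt.2 (Fin.castSucc_lt_last k).le
        have h2 : Fin.last n ≠ k.castSucc := (Fin.castSucc_lt_last k).ne'
        simp [h1, h2]
    simp only [hcast, hlast]
    rw [← Finset.sum_mul, ← ih (fun j => a j.castSucc) (fun j => b j.castSucc)]
    ring



section Slice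

variable {T t : ℝ} {m : ℕ}

lemma simplex_closed (ν : ℕ) (r : ℝ) : IsClosed (simplexSet ν r) := by
  have : simplexSet ν r = (⋂ j, {u : Fin ν → ℝ | 0 ≤ u j}) ∩
      ((⋂ (p) (q) (_ : p ≤ q), {u : Fin ν → ℝ | u p ≤ u q}) ∩ ⋂ j, {u : Fin ν → ℝ | u j ≤ r}) := by
    ext u
    constructor
    · rintro ⟨h1, h2, h3⟩
      refine ⟨Set.mem_iInter.2 h1, ⟨?_, Set.mem_iInter.2 h3⟩⟩
      simp only [Set.mem_iInter, Set.mem_setOf_eq]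
      exact fun p q hpq => h2 hpq
    · rintro ⟨h1, h2, h3⟩
      simp only [Set.mem_iInter, Set.mem_setOf_eq] at h1 h2 h3
      exact ⟨h1, fun p q hpq => h2 p q hpq, h3⟩
  rw [this]
  refine IsClosed.inter (isClosed_iInter fun j => isClosed_le continuous_const (continuous_apply j))
    (IsClosed.inter (isClosed_iInter fun p => isClosed_iInter fun q => isClosed_iInter fun _ =>
      isClosed_le (continuous_apply p) (continuous_apply q))
      (isClosed_iInter fun j => isClosed_le (continuous_apply j) continuous_const))

lemma simplex_convex (ν : ℕ) (r : ℝ) : Convex ℝ (simplexSet ν r) := by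
  intro x hx y hy p q hp hq hpq
  refine ⟨fun j => ?_, fun j j' hjj' => ?_, fun j => ?_⟩
  · have : (p • x + q • y) j = p * x j + q * y j := by simp [smul_eq_mul]
    rw [this]
    exact add_nonneg (mul_nonneg hp (hx.1 j)) (mul_nonneg hq (hy.1 j))
  · have h1 : (p • x + q • y) j = p * x j + q * y j := by simp [smul_eq_mul]
    have h2 : (p • x + q • y) j' = p * x j' + q * y j' := by simp [smul_eq_mul]
    rw [h1, h2]
    exact add_le_add (mul_le_mul_of_nonneg_left (hx.2.1 hjj') hp)
      (mul_le_mul_of_nonneg_left (hy.2.1 hjj') hq)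
  · have h1 : (p • x + q • y) j = p * x j + q * y j := by simp [smul_eq_mul]
    rw [h1]
    calc p * x j + q * y j ≤ p * r + q * r :=
          add_le_add (mul_le_mul_of_nonneg_left (hx.2.2 j) hp)
            (mul_le_mul_of_nonneg_left (hy.2.2 j) hq)
      _ = r := by rw [← add_mul, hpq, one_mul]

lemma simplex_subset_pi (ν : ℕ) (r : ℝ) :
    simplexSet ν r ⊆ Set.pi Set.univ (fun _ : Fin ν => Set.Icc 0 r) := by
  intro u hu j _
  exact ⟨hu.1 j, hu.2.2 j⟩

lemma slice_bound (hT : 0 < T) (ht0 : 0 ≤ t) (htT : t ≤ T)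
    (h : Fin (m+1) → ℝ → ℝ) (k : Fin (m+1))
    (hmeas : ∀ j, Measurable (h j))
    (hbd : ∀ j, j ≠ k → ∀ u ∈ Set.Ioo (0:ℝ) T, |h j u| ≤ 1)
    (hbdk : ∀ u ∈ Set.Ioo (0:ℝ) T, |h k u| ≤ 2)
    {δ : ℝ} (hδ : 0 ≤ δ)
    (hprim : ∀ a b : ℝ, 0 ≤ a → a ≤ b → b ≤ T → |∫ u in Set.Ioc a b, h k u| ≤ δ) :
    |∫ u in simplexSet (m+1) t, ∏ j, h j (u j)| ≤ δ * t ^ m := by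
  have hSmeas : MeasurableSet (simplexSet (m+1) t) := (simplex_closed (m+1) t).measurableSet
  have hFmeas : Measurable (fun u : Fin (m+1) → ℝ => ∏ j, h j (u j)) :=
    Finset.measurable_prod _ fun j _ => (hmeas j).comp (measurable_pi_apply j)
  have hfmeas : Measurable ((simplexSet (m+1) t).indicator
      (fun u : Fin (m+1) → ℝ => ∏ j, h j (u j))) := hFmeas.indicator hSmeas
  -- coordinates avoid 0 and T a.e.
  have hae : ∀ᵐ u : Fin (m+1) → ℝ, ∀ j, u j ≠ 0 ∧ u j ≠ T := by
    rw [ae_all_iff]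
    intro j
    rw [eventually_and]
    constructor
    · rw [MeasureTheory.volume_pi]
      exact MeasureTheory.Measure.ae_eval_ne (fun _ : Fin (m+1) => (volume : Measure ℝ)) j 0
    · rw [MeasureTheory.volume_pi]
      exact MeasureTheory.Measure.ae_eval_ne (fun _ : Fin (m+1) => (volume : Measure ℝ)) j T
  have hmemIoo : ∀ u : Fin (m+1) → ℝ, u ∈ simplexSet (m+1) t → ∀ j, u j ≠ 0 ∧ u j ≠ T → u j ∈ Set.Ioo (0:ℝ) T := by
    intro u hu j hj
    exact ⟨lt_of_le_of_ne (hu.1 j) (Ne.symm hj.1), lt_of_le_of_ne ((hu.2.2 j).trans htT) hj.2⟩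
  -- integrability of f
  have hg2int : Integrable ((Set.pi Set.univ fun _ : Fin (m+1) => Set.Icc (0:ℝ) t).indicator
      (fun _ => (2:ℝ))) := by
    rw [integrable_indicator_iff (MeasurableSet.univ_pi fun _ => measurableSet_Icc)]
    refine integrableOn_const ?_
    rw [volume_pi_pi]
    simp only [Real.volume_Icc, sub_zero]
    exact (ENNReal.prod_lt_top fun _ _ => ENNReal.ofReal_lt_top).ne
  have habsbd : ∀ u : Fin (m+1) → ℝ, (∀ j, u j ≠ 0 ∧ u j ≠ T) → u ∈ simplexSet (m+1) t →
      |∏ j, h j (u j)| ≤ 2 := by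
    intro u hu huS
    rw [Finset.abs_prod]
    calc (∏ j, |h j (u j)|) ≤ ∏ j, (if j = k then 2 else 1) := by
          refine Finset.prod_le_prod (fun j _ => abs_nonneg _) (fun j _ => ?_)
          by_cases hjk : j = k
          · simp only [hjk, if_pos rfl]
            subst hjk
            exact hbdk _ (hmemIoo u huS j (hu j))
          · simp only [if_neg hjk]
            exact hbd j hjk _ (hmemIoo u huS j (hu j))
      _ = 2 := by rw [Finset.prod_ite_eq' Finset.univ k (fun _ => (2:ℝ))]; simp
  have hfint : Integrable ((simplexSet (m+1) t).indicator
      (fun u : Fin (m+1) → ℝ => ∏ j, h j (u j))) := by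
    refine Integrable.mono' hg2int hfmeas.aestronglyMeasurable ?_
    filter_upwards [hae] with u hu
    by_cases huS : u ∈ simplexSet (m+1) t
    · rw [Set.indicator_of_mem huS]
      have h2 : (Set.pi Set.univ fun _ : Fin (m+1) => Set.Icc (0:ℝ) t).indicator
          (fun _ => (2:ℝ)) u = 2 :=
        Set.indicator_of_mem (simplex_subset_pi (m+1) t huS) _
      rw [h2, Real.norm_eq_abs]
      exact habsbd u hu huS
    · rw [Set.indicator_of_notMem huS]
      simp only [norm_zero]
      exact Set.indicator_nonneg (fun _ _ => by norm_num) u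
  -- continuity of the insertion map
  have hcont : ∀ w : Fin m → ℝ, Continuous fun y : ℝ => (Fin.insertNth (α := fun _ => ℝ) k y w) := by
    intro w
    refine continuous_pi fun j => ?_
    refine Fin.succAboveCases k ?_ ?_ j
    · simp only [Fin.insertNth_apply_same]; exact continuous_id
    · intro j'
      simpa [Fin.insertNth_apply_succAbove] using (continuous_const : Continuous fun _ : ℝ => w j')
  have hSwmeas : ∀ w : Fin m → ℝ,
      MeasurableSet {y : ℝ | (Fin.insertNth (α := fun _ => ℝ) k y w) ∈ simplexSet (m+1) t} :=
    fun w => (IsClosed.preimage (hcont w) (simplex_closed (m+1) t)).measurableSet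
  -- convexity of slices
  have hSwconv : ∀ w : Fin m → ℝ,
      Convex ℝ {y : ℝ | (Fin.insertNth (α := fun _ => ℝ) k y w) ∈ simplexSet (m+1) t} := by
    intro w y1 hy1 y2 hy2 p q hp hq hpq
    have key : (Fin.insertNth (α := fun _ => ℝ) k (p • y1 + q • y2) w) =
        p • (Fin.insertNth (α := fun _ => ℝ) k y1 w) + q • (Fin.insertNth (α := fun _ => ℝ) k y2 w) := by
      funext j
      refine Fin.succAboveCases k ?_ ?_ j
      · simp [Fin.insertNth_apply_same]
      · intro j'
        simp only [Fin.insertNth_apply_succAbove, Pi.add_apply, Pi.smul_apply, smul_eq_mul]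
        rw [← add_mul, hpq, one_mul]
    show (Fin.insertNth (α := fun _ => ℝ) k (p • y1 + q • y2) w) ∈ simplexSet (m+1) t
    rw [key]
    exact simplex_convex (m+1) t hy1 hy2 hp hq hpq
  -- slices are contained in [0, t]
  have hSwsub : ∀ w : Fin m → ℝ,
      {y : ℝ | (Fin.insertNth (α := fun _ => ℝ) k y w) ∈ simplexSet (m+1) t} ⊆ Set.Icc 0 t := by
    intro w y hy
    have h1 := hy.1 k
    have h2 := hy.2.2 k
    rw [Fin.insertNth_apply_same] at h1 h2
    exact ⟨h1, h2⟩
  -- the measurable equivalence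
  set e := MeasurableEquiv.piFinSuccAbove (fun _ : Fin (m+1) => ℝ) k with he
  have hmp : MeasurePreserving e.symm :=
    (volume_preserving_piFinSuccAbove (fun _ : Fin (m+1) => ℝ) k).symm e
  have hesymm : ∀ (y : ℝ) (w : Fin m → ℝ), e.symm (y, w) = (Fin.insertNth (α := fun _ => ℝ) k y w) := by
    intro y w
    simp [he, MeasurableEquiv.piFinSuccAbove_symm_apply, Fin.insertNthEquiv]
  have hint2 : Integrable (fun p : ℝ × (Fin m → ℝ) =>
      (simplexSet (m+1) t).indicator (fun u => ∏ j, h j (u j)) (e.symm p)) :=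
    (hmp.integrable_comp_emb e.symm.measurableEmbedding).2 hfint
  have step1 : ∫ u in simplexSet (m+1) t, ∏ j, h j (u j) =
      ∫ p : ℝ × (Fin m → ℝ),
        (simplexSet (m+1) t).indicator (fun u => ∏ j, h j (u j)) (e.symm p) := by
    rw [← integral_indicator hSmeas]
    exact (hmp.integral_comp' _).symm
  have step2 : ∫ p : ℝ × (Fin m → ℝ),
        (simplexSet (m+1) t).indicator (fun u => ∏ j, h j (u j)) (e.symm p) =
      ∫ w : Fin m → ℝ, ∫ y : ℝ,
        (simplexSet (m+1) t).indicator (fun u => ∏ j, h j (u j)) (e.symm (y, w)) := by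
    rw [Measure.volume_eq_prod]
    refine integral_prod_symm _ ?_
    rw [← Measure.volume_eq_prod]
    exact hint2
  -- rewrite the inner integral
  have hinner : ∀ w : Fin m → ℝ,
      (∫ y : ℝ, (simplexSet (m+1) t).indicator (fun u => ∏ j, h j (u j)) (e.symm (y, w))) =
      (∫ y in {y : ℝ | (Fin.insertNth (α := fun _ => ℝ) k y w) ∈ simplexSet (m+1) t}, h k y) *
        ∏ j : Fin m, h (k.succAbove j) (w j) := by
    intro w
    have heq : ∀ y : ℝ,
        (simplexSet (m+1) t).indicator (fun u => ∏ j, h j (u j)) (e.symm (y, w)) =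
        {y' : ℝ | (Fin.insertNth (α := fun _ => ℝ) k y' w) ∈ simplexSet (m+1) t}.indicator
          (fun y' => h k y' * ∏ j : Fin m, h (k.succAbove j) (w j)) y := by
      intro y
      rw [hesymm]
      by_cases hy : (Fin.insertNth (α := fun _ => ℝ) k y w) ∈ simplexSet (m+1) t
      · rw [Set.indicator_of_mem hy, Set.indicator_of_mem (by exact hy)]
        rw [Fin.prod_univ_succAbove (fun j => h j ((Fin.insertNth (α := fun _ => ℝ) k y w) j)) k]
        simp [Fin.insertNth_apply_same, Fin.insertNth_apply_succAbove]
      · rw [Set.indicator_of_notMem hy, Set.indicator_of_notMem (by exact hy)]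
    simp_rw [heq]
    rw [integral_indicator (hSwmeas w), integral_mul_const]
  -- pointwise bound on the outer integrand
  have houter : ∀ᵐ w : Fin m → ℝ,
      |∫ y : ℝ, (simplexSet (m+1) t).indicator (fun u => ∏ j, h j (u j)) (e.symm (y, w))| ≤
      (Set.pi Set.univ fun _ : Fin m => Set.Icc (0:ℝ) t).indicator (fun _ => δ) w := by
    have haew : ∀ᵐ w : Fin m → ℝ, ∀ j, w j ≠ 0 ∧ w j ≠ T := by
      rw [ae_all_iff]
      intro j
      rw [eventually_and]
      constructor
      · rw [MeasureTheory.volume_pi]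
        exact MeasureTheory.Measure.ae_eval_ne (fun _ : Fin m => (volume : Measure ℝ)) j 0
      · rw [MeasureTheory.volume_pi]
        exact MeasureTheory.Measure.ae_eval_ne (fun _ : Fin m => (volume : Measure ℝ)) j T
    filter_upwards [haew] with w hw
    rw [hinner w]
    by_cases hne : ({y : ℝ | (Fin.insertNth (α := fun _ => ℝ) k y w) ∈ simplexSet (m+1) t}).Nonempty
    · obtain ⟨y₀, hy₀⟩ := hne
      have hwIcc : ∀ j : Fin m, w j ∈ Set.Icc (0:ℝ) t := by
        intro j
        have h1 := hy₀.1 (k.succAbove j)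
        have h2 := hy₀.2.2 (k.succAbove j)
        rw [Fin.insertNth_apply_succAbove] at h1 h2
        exact ⟨h1, h2⟩
      have hg3 : (Set.pi Set.univ fun _ : Fin m => Set.Icc (0:ℝ) t).indicator
          (fun _ => δ) w = δ :=
        Set.indicator_of_mem (Set.mem_univ_pi.2 fun j => hwIcc j) _
      rw [hg3, abs_mul]
      have hprod1 : |∏ j : Fin m, h (k.succAbove j) (w j)| ≤ 1 := by
        rw [Finset.abs_prod]
        refine Finset.prod_le_one (fun j _ => abs_nonneg _) (fun j _ => ?_)
        refine hbd (k.succAbove j) (Fin.succAbove_ne k j) _ ?_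
        exact ⟨lt_of_le_of_ne (hwIcc j).1 (Ne.symm (hw j).1),
          lt_of_le_of_ne ((hwIcc j).2.trans htT) (hw j).2⟩
      have hSweq : {y : ℝ | (Fin.insertNth (α := fun _ => ℝ) k y w) ∈ simplexSet (m+1) t} =
          Set.Icc (sInf {y : ℝ | (Fin.insertNth (α := fun _ => ℝ) k y w) ∈ simplexSet (m+1) t})
            (sSup {y : ℝ | (Fin.insertNth (α := fun _ => ℝ) k y w) ∈ simplexSet (m+1) t}) := by
        refine eq_Icc_of_connected_compact ⟨⟨y₀, hy₀⟩, (hSwconv w).isPreconnected⟩ ?_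
        exact isCompact_Icc.of_isClosed_subset
          (IsClosed.preimage (hcont w) (simplex_closed (m+1) t)) (hSwsub w)
      have hbdd : BddBelow {y : ℝ | (Fin.insertNth (α := fun _ => ℝ) k y w) ∈ simplexSet (m+1) t} :=
        ⟨0, fun y hy => (hSwsub w hy).1⟩
      have hbdd2 : BddAbove {y : ℝ | (Fin.insertNth (α := fun _ => ℝ) k y w) ∈ simplexSet (m+1) t} :=
        ⟨t, fun y hy => (hSwsub w hy).2⟩
      have h0inf : 0 ≤ sInf {y : ℝ | (Fin.insertNth (α := fun _ => ℝ) k y w) ∈ simplexSet (m+1) t} :=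
        le_csInf ⟨y₀, hy₀⟩ (fun y hy => (hSwsub w hy).1)
      have hsupt : sSup {y : ℝ | (Fin.insertNth (α := fun _ => ℝ) k y w) ∈ simplexSet (m+1) t} ≤ t :=
        csSup_le ⟨y₀, hy₀⟩ (fun y hy => (hSwsub w hy).2)
      have hinfsup : sInf {y : ℝ | (Fin.insertNth (α := fun _ => ℝ) k y w) ∈ simplexSet (m+1) t} ≤
          sSup {y : ℝ | (Fin.insertNth (α := fun _ => ℝ) k y w) ∈ simplexSet (m+1) t} :=
        csInf_le_csSup ⟨y₀, hy₀⟩ hbdd hbdd2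
      have hIval : |∫ y in {y : ℝ | (Fin.insertNth (α := fun _ => ℝ) k y w) ∈ simplexSet (m+1) t}, h k y| ≤ δ := by
        rw [hSweq, MeasureTheory.integral_Icc_eq_integral_Ioc]
        exact hprim _ _ h0inf hinfsup (hsupt.trans htT)
      calc |∫ y in {y : ℝ | (Fin.insertNth (α := fun _ => ℝ) k y w) ∈ simplexSet (m+1) t}, h k y| *
            |∏ j : Fin m, h (k.succAbove j) (w j)| ≤ δ * 1 :=
            mul_le_mul hIval hprod1 (abs_nonneg _) hδ
        _ = δ := mul_one δ
    · rw [Set.not_nonempty_iff_eq_empty] at hne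
      rw [hne]
      simp only [Measure.restrict_empty, integral_zero_measure, zero_mul, abs_zero]
      exact Set.indicator_nonneg (fun _ _ => hδ) w
  -- put everything together
  have hg3int : Integrable ((Set.pi Set.univ fun _ : Fin m => Set.Icc (0:ℝ) t).indicator
      (fun _ => δ)) := by
    rw [integrable_indicator_iff (MeasurableSet.univ_pi fun _ => measurableSet_Icc)]
    refine integrableOn_const ?_
    rw [volume_pi_pi]
    simp only [Real.volume_Icc, sub_zero]
    exact (ENNReal.prod_lt_top fun _ _ => ENNReal.ofReal_lt_top).ne
  rw [step1, step2]
  calc |∫ w : Fin m → ℝ, ∫ y : ℝ,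
        (simplexSet (m+1) t).indicator (fun u => ∏ j, h j (u j)) (e.symm (y, w))| ≤
      ∫ w : Fin m → ℝ, |∫ y : ℝ,
        (simplexSet (m+1) t).indicator (fun u => ∏ j, h j (u j)) (e.symm (y, w))| := by
        simpa using norm_integral_le_integral_norm (fun w : Fin m → ℝ => ∫ y : ℝ,
          (simplexSet (m+1) t).indicator (fun u => ∏ j, h j (u j)) (e.symm (y, w)))
    _ ≤ ∫ w : Fin m → ℝ, (Set.pi Set.univ fun _ : Fin m => Set.Icc (0:ℝ) t).indicator
          (fun _ => δ) w :=
        integral_mono_of_nonneg (Filter.Eventually.of_forall fun w => abs_nonneg _) hg3int houter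
    _ = δ * t ^ m := by
        rw [integral_indicator_const _ (MeasurableSet.univ_pi fun _ => measurableSet_Icc)]
        rw [measureReal_def, volume_pi_pi]
        simp only [Real.volume_Icc, sub_zero, Finset.prod_const, Finset.card_univ,
          Fintype.card_fin]
        rw [← ENNReal.ofReal_pow ht0, ENNReal.toReal_ofReal (pow_nonneg ht0 m), smul_eq_mul]
        ring

end Slice



lemma prod_integrableOn {T t : ℝ} {ν : ℕ} (ht0 : 0 ≤ t) (htT : t ≤ T)
    (h : Fin ν → ℝ → ℝ) (hmeas : ∀ j, Measurable (h j))
    (hbd : ∀ j, ∀ u ∈ Set.Ioo (0:ℝ) T, |h j u| ≤ 2) :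
    IntegrableOn (fun u => ∏ j, h j (u j)) (simplexSet ν t) volume := by
  have hSmeas : MeasurableSet (simplexSet ν t) := (simplex_closed ν t).measurableSet
  rw [← integrable_indicator_iff hSmeas]
  have hFmeas : Measurable (fun u : Fin ν → ℝ => ∏ j, h j (u j)) :=
    Finset.measurable_prod _ fun j _ => (hmeas j).comp (measurable_pi_apply j)
  have hg2int : Integrable ((Set.pi Set.univ fun _ : Fin ν => Set.Icc (0:ℝ) t).indicator
      (fun _ => (2:ℝ) ^ ν)) := by
    rw [integrable_indicator_iff (MeasurableSet.univ_pi fun _ => measurableSet_Icc)]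
    refine integrableOn_const ?_
    rw [volume_pi_pi]
    simp only [Real.volume_Icc, sub_zero]
    exact (ENNReal.prod_lt_top fun _ _ => ENNReal.ofReal_lt_top).ne
  have hae : ∀ᵐ u : Fin ν → ℝ, ∀ j, u j ≠ 0 ∧ u j ≠ T := by
    rw [ae_all_iff]
    intro j
    rw [eventually_and]
    constructor
    · rw [MeasureTheory.volume_pi]
      exact MeasureTheory.Measure.ae_eval_ne (fun _ : Fin ν => (volume : Measure ℝ)) j 0
    · rw [MeasureTheory.volume_pi]
      exact MeasureTheory.Measure.ae_eval_ne (fun _ : Fin ν => (volume : Measure ℝ)) j T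
  refine Integrable.mono' hg2int (hFmeas.indicator hSmeas).aestronglyMeasurable ?_
  filter_upwards [hae] with u hu
  by_cases huS : u ∈ simplexSet ν t
  · rw [Set.indicator_of_mem huS,
      Set.indicator_of_mem (simplex_subset_pi ν t huS), Real.norm_eq_abs, Finset.abs_prod]
    calc (∏ j, |h j (u j)|) ≤ ∏ _j : Fin ν, (2:ℝ) := by
          refine Finset.prod_le_prod (fun j _ => abs_nonneg _) (fun j _ => ?_)
          refine hbd j _ ⟨lt_of_le_of_ne (huS.1 j) (Ne.symm (hu j).1),
            lt_of_le_of_ne ((huS.2.2 j).trans htT) (hu j).2⟩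
      _ = 2 ^ ν := by rw [Finset.prod_const, Finset.card_univ, Fintype.card_fin]
  · rw [Set.indicator_of_notMem huS]
    simp only [norm_zero]
    exact Set.indicator_nonneg (fun _ _ => by positivity) u

lemma integrableOn_Ioc_of_bound (φ : ℝ → ℝ) (hm : Measurable φ) {a b T c : ℝ}
    (h0a : 0 ≤ a) (hbT : b ≤ T) (hbd : ∀ u ∈ Set.Ioo (0:ℝ) T, |φ u| ≤ c) :
    IntegrableOn φ (Set.Ioc a b) volume := by
  refine Integrable.mono' (integrableOn_const (C := c) measure_Ioc_lt_top.ne)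
    hm.aestronglyMeasurable ?_
  filter_upwards [ae_restrict_of_ae (ae_ne_ T), ae_restrict_mem measurableSet_Ioc] with u h1 h2
  rw [Real.norm_eq_abs]
  exact hbd u ⟨lt_of_le_of_lt h0a h2.1, lt_of_le_of_ne (h2.2.trans hbT) h1⟩

/-- `Φ^(ν)` is `1/2`-Hölder continuous from `H` to `C([0,T]; ℝ^{d^ν})`
with respect to the supremum norms. -/
theorem holder_half_Phi (d ν : ℕ) (T : ℝ) (hT : 0 < T) :
    ∃ C > 0, ∀ γ γ' : ℝ → Fin d → ℝ, HPath d T γ → HPath d T γ' →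
      ∀ t ∈ Set.Icc (0:ℝ) T,
        ‖Phi d ν γ t - Phi d ν γ' t‖ ≤
          C * (⨆ s : Set.Icc (0:ℝ) T, ‖γ s - γ' s‖) ^ ((1:ℝ)/2) := by
  set K : ℝ := 2 * (ν:ℝ) * (T+1)^ν + 1 with hK
  have hK0 : 0 < K := by positivity
  refine ⟨K * (2*T) ^ ((1:ℝ)/2) + 1, by positivity, ?_⟩
  intro γ γ' hγ hγ' t ht
  set ε := ⨆ s : Set.Icc (0:ℝ) T, ‖γ (s:ℝ) - γ' (s:ℝ)‖ with hε
  have hne : Nonempty (Set.Icc (0:ℝ) T) := ⟨⟨0, le_refl 0, hT.le⟩⟩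
  have hptbd : ∀ s : Set.Icc (0:ℝ) T, ‖γ (s:ℝ) - γ' (s:ℝ)‖ ≤ 2 * T := by
    intro s
    have hb : ∀ (δf : ℝ → Fin d → ℝ), HPath d T δf → ‖δf (s:ℝ)‖ ≤ T := by
      intro δf hδ
      have h := hδ.2.dist_le_mul (s:ℝ) s.2 0 (Set.left_mem_Icc.2 hT.le)
      rw [hδ.1, dist_zero_right, Real.dist_0_eq_abs, abs_of_nonneg s.2.1] at h
      calc ‖δf (s:ℝ)‖ ≤ 1 * (s:ℝ) := by simpa using h
        _ ≤ T := by rw [one_mul]; exact s.2.2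
    calc ‖γ (s:ℝ) - γ' (s:ℝ)‖ ≤ ‖γ (s:ℝ)‖ + ‖γ' (s:ℝ)‖ := norm_sub_le _ _
      _ ≤ T + T := add_le_add (hb γ hγ) (hb γ' hγ')
      _ = 2 * T := by ring
  have hbddA : BddAbove (Set.range fun s : Set.Icc (0:ℝ) T => ‖γ (s:ℝ) - γ' (s:ℝ)‖) :=
    ⟨2*T, by rintro x ⟨s, rfl⟩; exact hptbd s⟩
  have hεle : ∀ s : ℝ, s ∈ Set.Icc (0:ℝ) T → ‖γ s - γ' s‖ ≤ ε := fun s hs =>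
    le_ciSup hbddA (⟨s, hs⟩ : Set.Icc (0:ℝ) T)
  have hε0 : 0 ≤ ε := le_trans (norm_nonneg _) (hεle 0 ⟨le_refl 0, hT.le⟩)
  have hε2T : ε ≤ 2*T := ciSup_le hptbd
  -- main Lipschitz-type estimate
  have main : ‖Phi d ν γ t - Phi d ν γ' t‖ ≤ K * ε := by
    rw [pi_norm_le_iff_of_nonneg (by positivity)]
    intro i
    rw [Pi.sub_apply, Real.norm_eq_abs]
    cases ν with
    | zero =>
      have : Phi d 0 γ t i = Phi d 0 γ' t i := by
        simp [Phi]
      rw [this, sub_self, abs_zero]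
      positivity
    | succ m =>
      simp only [Phi]
      set F : Fin (m+1) → ℝ → ℝ := fun j => deriv (fun v => γ v (i j)) with hF
      set G : Fin (m+1) → ℝ → ℝ := fun j => deriv (fun v => γ' v (i j)) with hG
      have hcompL : ∀ (δf : ℝ → Fin d → ℝ), HPath d T δf → ∀ κ : Fin d,
          LipschitzOnWith 1 (fun v => δf v κ) (Set.Icc 0 T) := by
        intro δf hδ κ x hx y hy
        exact le_trans (edist_le_pi_edist _ _ κ) (hδ.2 hx hy)
      have hFbd : ∀ j, ∀ u ∈ Set.Ioo (0:ℝ) T, |F j u| ≤ 1 := fun j u hu =>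
        deriv_le_one _ (hcompL γ hγ (i j)) hu
      have hGbd : ∀ j, ∀ u ∈ Set.Ioo (0:ℝ) T, |G j u| ≤ 1 := fun j u hu =>
        deriv_le_one _ (hcompL γ' hγ' (i j)) hu
      have hFmeas : ∀ j, Measurable (F j) := fun j => measurable_deriv _
      have hGmeas : ∀ j, Measurable (G j) := fun j => measurable_deriv _
      set Hf : Fin (m+1) → Fin (m+1) → ℝ → ℝ := fun k j =>
        if j < k then F j else if j = k then (fun u => F j u - G j u) else G j with hHf
      have hHmeas : ∀ k j, Measurable (Hf k j) := by
        intro k j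
        rw [hHf]
        dsimp only
        split_ifs
        exacts [hFmeas j, (hFmeas j).sub (hGmeas j), hGmeas j]
      have hHbd2 : ∀ k j, ∀ u ∈ Set.Ioo (0:ℝ) T, |Hf k j u| ≤ 2 := by
        intro k j u hu
        rw [hHf]
        dsimp only
        split_ifs
        · exact le_trans (hFbd j u hu) one_le_two
        · exact le_trans (abs_sub _ _) (by linarith [hFbd j u hu, hGbd j u hu])
        · exact le_trans (hGbd j u hu) one_le_two
      have hintF : IntegrableOn (fun u => ∏ j, F j (u j)) (simplexSet (m+1) t) volume :=
        prod_integrableOn ht.1 ht.2 F hFmeas (fun j u hu => le_trans (hFbd j u hu) one_le_two)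
      have hintG : IntegrableOn (fun u => ∏ j, G j (u j)) (simplexSet (m+1) t) volume :=
        prod_integrableOn ht.1 ht.2 G hGmeas (fun j u hu => le_trans (hGbd j u hu) one_le_two)
      have hintH : ∀ k, IntegrableOn (fun u => ∏ j, Hf k j (u j)) (simplexSet (m+1) t) volume :=
        fun k => prod_integrableOn ht.1 ht.2 (Hf k) (hHmeas k) (hHbd2 k)
      have key : (∫ u in simplexSet (m+1) t, ∏ j, F j (u j)) -
          (∫ u in simplexSet (m+1) t, ∏ j, G j (u j)) =
          ∑ k : Fin (m+1), ∫ u in simplexSet (m+1) t, ∏ j, Hf k j (u j) := by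
        rw [← integral_sub hintF hintG, ← integral_finset_sum _ (fun k _ => hintH k)]
        refine integral_congr_ae (Filter.Eventually.of_forall fun u => ?_)
        show (∏ j, F j (u j)) - (∏ j, G j (u j)) = ∑ k : Fin (m+1), ∏ j, Hf k j (u j)
        rw [tele (fun j => F j (u j)) (fun j => G j (u j))]
        refine Finset.sum_congr rfl fun k _ => Finset.prod_congr rfl fun j _ => ?_
        rw [hHf]
        dsimp only
        split_ifs <;> rfl
      rw [key]
      have hslice : ∀ k : Fin (m+1),
          |∫ u in simplexSet (m+1) t, ∏ j, Hf k j (u j)| ≤ (2*ε) * t ^ m := by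
        intro k
        refine slice_bound hT ht.1 ht.2 (Hf k) k (hHmeas k) ?_ ?_ (by positivity) ?_
        · intro j hjk u hu
          rw [hHf]
          dsimp only
          rcases lt_trichotomy j k with hlt | heq | hgt
          · rw [if_pos hlt]; exact hFbd j u hu
          · exact absurd heq hjk
          · rw [if_neg (not_lt.2 hgt.le), if_neg hjk]; exact hGbd j u hu
        · intro u hu
          exact hHbd2 k k u hu
        · intro a b ha hab hbT
          have hkk : Hf k k = fun u => F k u - G k u := by
            rw [hHf]; dsimp only; rw [if_neg (lt_irrefl k), if_pos rfl]
          rw [hkk]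
          have hIF : IntegrableOn (F k) (Set.Ioc a b) volume :=
            integrableOn_Ioc_of_bound _ (hFmeas k) ha hbT (hFbd k)
          have hIG : IntegrableOn (G k) (Set.Ioc a b) volume :=
            integrableOn_Ioc_of_bound _ (hGmeas k) ha hbT (hGbd k)
          rw [integral_sub hIF hIG, hF, hG]
          rw [lipschitzOn_integral_deriv _ (hcompL γ hγ (i k)) ha hab hbT,
            lipschitzOn_integral_deriv _ (hcompL γ' hγ' (i k)) ha hab hbT]
          have h1 : |γ b (i k) - γ' b (i k)| ≤ ε :=
            le_trans (by simpa using norm_le_pi_norm (γ b - γ' b) (i k))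
              (hεle b ⟨ha.trans hab, hbT⟩)
          have h2 : |γ a (i k) - γ' a (i k)| ≤ ε :=
            le_trans (by simpa using norm_le_pi_norm (γ a - γ' a) (i k))
              (hεle a ⟨ha, hab.trans hbT⟩)
          have hre : (γ b (i k) - γ a (i k)) - (γ' b (i k) - γ' a (i k)) =
              (γ b (i k) - γ' b (i k)) - (γ a (i k) - γ' a (i k)) := by ring
          rw [hre]
          calc |(γ b (i k) - γ' b (i k)) - (γ a (i k) - γ' a (i k))| ≤
              |γ b (i k) - γ' b (i k)| + |γ a (i k) - γ' a (i k)| := abs_sub _ _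
            _ ≤ 2 * ε := by linarith
      calc |∑ k : Fin (m+1), ∫ u in simplexSet (m+1) t, ∏ j, Hf k j (u j)| ≤
          ∑ k : Fin (m+1), |∫ u in simplexSet (m+1) t, ∏ j, Hf k j (u j)| :=
            Finset.abs_sum_le_sum_abs _ _
        _ ≤ ∑ _k : Fin (m+1), (2*ε) * t ^ m := Finset.sum_le_sum fun k _ => hslice k
        _ = ((m:ℝ)+1) * ((2*ε) * t ^ m) := by
            rw [Finset.sum_const, Finset.card_univ, Fintype.card_fin, nsmul_eq_mul]
            push_cast
            ring
        _ ≤ K * ε := by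
            have ht1 : t ^ m ≤ (T+1) ^ (m+1) :=
              le_trans (pow_le_pow_left₀ ht.1 (by linarith [ht.2]) m)
                (pow_le_pow_right₀ (by linarith) (Nat.le_succ m))
            have hK' : K = 2 * ((m:ℝ)+1) * (T+1)^(m+1) + 1 := by
              rw [hK]; push_cast; ring
            rw [hK']
            have h3 : ((m:ℝ)+1) * ((2*ε) * t ^ m) ≤ ((m:ℝ)+1) * ((2*ε) * (T+1)^(m+1)) := by
              have := mul_le_mul_of_nonneg_left ht1 (by positivity : (0:ℝ) ≤ 2*ε)
              have hm1 : (0:ℝ) ≤ (m:ℝ)+1 := by positivity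
              exact mul_le_mul_of_nonneg_left this hm1
            calc ((m:ℝ)+1) * ((2*ε) * t ^ m) ≤ ((m:ℝ)+1) * ((2*ε) * (T+1)^(m+1)) := h3
              _ = 2 * ((m:ℝ)+1) * (T+1)^(m+1) * ε := by ring
              _ ≤ (2 * ((m:ℝ)+1) * (T+1)^(m+1) + 1) * ε := by nlinarith
  -- convert to Hölder bound
  rcases eq_or_lt_of_le hε0 with h0 | hpos
  · have hz : ε = 0 := h0.symm
    rw [hz] at main ⊢
    rw [Real.zero_rpow (by norm_num : (1:ℝ)/2 ≠ 0), mul_zero]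
    linarith [main]
  · have hsplit : ε = ε ^ ((1:ℝ)/2) * ε ^ ((1:ℝ)/2) := by
      rw [← Real.rpow_add hpos]
      norm_num
    have hrle : ε ^ ((1:ℝ)/2) ≤ (2*T) ^ ((1:ℝ)/2) :=
      Real.rpow_le_rpow hε0 hε2T (by norm_num)
    have hr0 : 0 ≤ ε ^ ((1:ℝ)/2) := Real.rpow_nonneg hε0 _
    calc ‖Phi d ν γ t - Phi d ν γ' t‖ ≤ K * ε := main
      _ = K * ε ^ ((1:ℝ)/2) * ε ^ ((1:ℝ)/2) := by rw [mul_assoc, ← hsplit]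
      _ ≤ K * (2*T) ^ ((1:ℝ)/2) * ε ^ ((1:ℝ)/2) := by
          refine mul_le_mul_of_nonneg_right ?_ hr0
          exact mul_le_mul_of_nonneg_left hrle hK0.le
      _ ≤ (K * (2*T) ^ ((1:ℝ)/2) + 1) * ε ^ ((1:ℝ)/2) := by nlinarith
end

section
/- Law of large numbers for iterated integrals: let ξ be a measurable ℝ^d-valued stochastic process on [0,∞) with |ξ(t)| ≤ 1 almost surely for all t, set φ_n(t) = n^{(-1)} ∫_0^{tn} ξ(u) du, and suppose there exists Q ∈ ℝ^d such that almost surely sup_{t ∈ [0,T]} |φ_n(t) − tQ| → 0 as n → ∞. Then for every ν ≥ 1, almost surely sup_{t ∈ [0,T]} | 𝕊_n^(ν)(t) − (t^ν/ν!) Q^{⊗ν} | → 0 as n → ∞, where 𝕊_n^(ν)(t) = n^{(-ν)} ∫_{0≤s_1≤⋯≤s_ν≤tn} ξ(s_1)⊗⋯⊗ξ(s_ν) ds_1⋯ds_ν and Q^{⊗ν} has coordinates Q_{i_1}⋯Q_{i_ν}. -/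
open MeasureTheory Filter Set
open Pointwise

lemma measurableSet_simplexSet (ν : ℕ) (r : ℝ) : MeasurableSet (simplexSet ν r) := by
  have h1 : MeasurableSet {u : Fin ν → ℝ | ∀ j, 0 ≤ u j} := by
    rw [Set.setOf_forall]
    exact MeasurableSet.iInter fun j => measurableSet_le measurable_const (measurable_pi_apply j)
  have h2 : MeasurableSet {u : Fin ν → ℝ | Monotone u} := by
    have : {u : Fin ν → ℝ | Monotone u} = ⋂ (j) (k) (_ : j ≤ k), {u | u j ≤ u k} := by
      ext u; simp [Monotone]
    rw [this]
    exact MeasurableSet.iInter fun j => MeasurableSet.iInter fun k => MeasurableSet.iInter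
      fun _ => measurableSet_le (measurable_pi_apply j) (measurable_pi_apply k)
  have h3 : MeasurableSet {u : Fin ν → ℝ | ∀ j, u j ≤ r} := by
    rw [Set.setOf_forall]
    exact MeasurableSet.iInter fun j => measurableSet_le (measurable_pi_apply j) measurable_const
  exact (h1.inter (h2.inter h3)).congr (by ext u; simp [simplexSet])

lemma simplexSet_subset_Icc (ν : ℕ) (r : ℝ) :
    simplexSet ν r ⊆ Set.Icc (0 : Fin ν → ℝ) (fun _ => max r 0) := by
  intro u hu
  exact ⟨fun j => hu.1 j, fun j => le_max_of_le_left (hu.2.2 j)⟩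

lemma volume_simplexSet_lt_top (ν : ℕ) (r : ℝ) : volume (simplexSet ν r) < ⊤ :=
  lt_of_le_of_lt (measure_mono (simplexSet_subset_Icc ν r))
    (by
      rw [show Set.Icc (0 : Fin ν → ℝ) (fun _ => max r 0)
            = Set.pi Set.univ (fun _ => Set.Icc 0 (max r 0)) by
          ext u; simp [Set.mem_Icc, Set.mem_pi, Pi.le_def, forall_and]]
      rw [volume_pi_pi]
      exact ENNReal.prod_lt_top fun i _ => measure_Icc_lt_top)

lemma integrableOn_simplexSet {ν : ℕ} {F : (Fin ν → ℝ) → ℝ} (hF : Measurable F)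
    {B : ℝ} (hB : ∀ u, |F u| ≤ B) (r : ℝ) : IntegrableOn F (simplexSet ν r) := by
  refine Measure.integrableOn_of_bounded (M := B) (volume_simplexSet_lt_top ν r).ne
    hF.aestronglyMeasurable ?_
  exact Filter.Eventually.of_forall fun u => by simpa using hB u

lemma integral_simplexSet_one (g : ℝ → ℝ) {t : ℝ} (ht : 0 ≤ t) :
    ∫ u in simplexSet 1 t, g (u 0) = ∫ s in (0:ℝ)..t, g s := by
  have hpre : simplexSet 1 t = (MeasurableEquiv.funUnique (Fin 1) ℝ) ⁻¹' (Set.Icc 0 t) := by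
    ext u
    constructor
    · rintro ⟨h1, _, h3⟩; exact ⟨h1 0, h3 0⟩
    · rintro ⟨h1, h2⟩
      refine ⟨fun j => by rw [Subsingleton.elim j 0]; exact h1, ?_, fun j => by
        rw [Subsingleton.elim j 0]; exact h2⟩
      intro a b _; rw [Subsingleton.elim a b]
  have hint : ∀ u : Fin 1 → ℝ, g (u 0) = g ((MeasurableEquiv.funUnique (Fin 1) ℝ) u) :=
    fun u => rfl
  simp_rw [hpre, hint]
  erw [(volume_preserving_funUnique (Fin 1) ℝ).setIntegral_preimage_emb
    (MeasurableEquiv.measurableEmbedding _) (fun s => g s) _,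
    intervalIntegral.integral_of_le ht, ← integral_Icc_eq_integral_Ioc]

lemma mem_simplexSet_snoc {ν : ℕ} {v : Fin ν → ℝ} {x t : ℝ} :
    Fin.snoc v x ∈ simplexSet (ν+1) t ↔ v ∈ simplexSet ν x ∧ x ∈ Set.Icc (0:ℝ) t := by
  constructor
  · rintro ⟨h1, h2, h3⟩
    refine ⟨⟨fun j => by simpa using h1 j.castSucc, ?_, fun j => ?_⟩, ?_, ?_⟩
    · intro a b hab
      have := h2 (show (a.castSucc : Fin (ν+1)) ≤ b.castSucc by simpa using hab)
      simpa using this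
    · have := h2 (show (j.castSucc : Fin (ν+1)) ≤ Fin.last ν from Fin.le_last _)
      simpa using this
    · simpa using h1 (Fin.last ν)
    · simpa using h3 (Fin.last ν)
  · rintro ⟨⟨h1, h2, h3⟩, hx0, hxt⟩
    have hval : ∀ j : Fin (ν+1), (Fin.snoc v x : Fin (ν+1) → ℝ) j ≤ x := by
      intro j
      induction j using Fin.lastCases with
      | last => simp
      | cast k => simpa using h3 k
    refine ⟨fun j => ?_, ?_, fun j => (hval j).trans hxt⟩
    · induction j using Fin.lastCases with
      | last => simpa using hx0
      | cast k => simpa using h1 k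
    · rw [Fin.monotone_iff_le_succ]
      intro k
      rcases Fin.eq_castSucc_or_eq_last k.succ with ⟨k', hs⟩ | hs
      · rw [hs]
        simp only [Fin.snoc_castSucc]
        refine h2 ?_
        have : (k : ℕ) + 1 = (k' : ℕ) := by
          have := congrArg Fin.val hs
          simpa using this
        exact le_of_lt (by omega : (k : ℕ) < (k' : ℕ))
      · rw [hs]
        simpa using hval k.castSucc

lemma measurableSet_simplexProd (ν : ℕ) :
    MeasurableSet {p : ℝ × (Fin ν → ℝ) | p.2 ∈ simplexSet ν p.1} := by
  have : {p : ℝ × (Fin ν → ℝ) | p.2 ∈ simplexSet ν p.1}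
      = (⋂ j, {p : ℝ × (Fin ν → ℝ) | 0 ≤ p.2 j}) ∩
        ((⋂ (j) (k) (_ : j ≤ k), {p : ℝ × (Fin ν → ℝ) | p.2 j ≤ p.2 k}) ∩
         (⋂ j, {p : ℝ × (Fin ν → ℝ) | p.2 j ≤ p.1})) := by
    ext p
    simp only [Set.mem_setOf_eq, Set.mem_inter_iff, Set.mem_iInter, simplexSet, Monotone]
  rw [this]
  have hev : ∀ j : Fin ν, Measurable fun p : ℝ × (Fin ν → ℝ) => p.2 j :=
    fun j => (measurable_pi_apply j).comp measurable_snd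
  exact ((MeasurableSet.iInter fun j => measurableSet_le measurable_const (hev j)).inter
    ((MeasurableSet.iInter fun j => MeasurableSet.iInter fun k => MeasurableSet.iInter
        fun _ => measurableSet_le (hev j) (hev k)).inter
     (MeasurableSet.iInter fun j => measurableSet_le (hev j) measurable_fst)))

lemma stronglyMeasurable_simplexIntegral {ν : ℕ} {G : (Fin ν → ℝ) → ℝ} (hG : Measurable G) :
    StronglyMeasurable fun s => ∫ v in simplexSet ν s, G v := by
  have key : (fun s => ∫ v in simplexSet ν s, G v)
      = fun s => ∫ v, ({p : ℝ × (Fin ν → ℝ) | p.2 ∈ simplexSet ν p.1}.indicator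
          (fun p => G p.2)) (s, v) := by
    funext s
    rw [← integral_indicator (measurableSet_simplexSet ν s)]
    congr 1
  rw [key]
  exact StronglyMeasurable.integral_prod_right'
    (((hG.comp measurable_snd).indicator (measurableSet_simplexProd ν)).stronglyMeasurable)

lemma slice_simplex {ν : ℕ} {G : (Fin ν → ℝ) → ℝ} {g : ℝ → ℝ}
    (hG : Measurable G) (hg : Measurable g)
    {BG Bg : ℝ} (hBG : ∀ u, |G u| ≤ BG) (hBg : ∀ s, |g s| ≤ Bg) {t : ℝ} (ht : 0 ≤ t) :
    ∫ u in simplexSet (ν+1) t, G (Fin.init u) * g (u (Fin.last ν)) =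
      ∫ s in (0:ℝ)..t, (∫ v in simplexSet ν s, G v) * g s := by
  have hBG0 : 0 ≤ BG := le_trans (abs_nonneg _) (hBG Classical.ofNonempty)
  have hBg0 : 0 ≤ Bg := le_trans (abs_nonneg _) (hBg 0)
  set F : (Fin (ν+1) → ℝ) → ℝ := fun u => G (Fin.init u) * g (u (Fin.last ν)) with hF
  have hFmeas : Measurable F := by
    apply Measurable.mul
    · exact hG.comp (measurable_pi_iff.2 fun j => measurable_pi_apply _)
    · exact hg.comp (measurable_pi_apply _)
  have hFbd : ∀ u, |F u| ≤ BG * Bg := fun u => by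
    rw [hF, abs_mul]
    exact mul_le_mul (hBG _) (hBg _) (abs_nonneg _) hBG0
  -- the measure-preserving equivalence
  set e := MeasurableEquiv.piFinSuccAbove (fun _ : Fin (ν+1) => ℝ) (Fin.last ν) with he
  have mp' : MeasurePreserving (⇑e) (volume : Measure (Fin (ν+1) → ℝ))
      ((volume : Measure ℝ).prod (volume : Measure (Fin ν → ℝ))) := by
    have := measurePreserving_piFinSuccAbove (fun _ : Fin (ν+1) => (volume : Measure ℝ))
      (Fin.last ν)
    rwa [← volume_pi, ← volume_pi] at this
  set H : ℝ × (Fin ν → ℝ) → ℝ := fun p => G p.2 * g p.1 with hH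
  set E : Set (ℝ × (Fin ν → ℝ)) :=
    {p | p.2 ∈ simplexSet ν p.1 ∧ p.1 ∈ Set.Icc (0:ℝ) t} with hE
  have hsymm : ∀ p : ℝ × (Fin ν → ℝ),
      (simplexSet (ν+1) t).indicator F (e.symm p) = E.indicator H p := by
    rintro ⟨x, v⟩
    have hes : e.symm (x, v) = Fin.snoc v x := by
      rw [he]
      simp only [MeasurableEquiv.piFinSuccAbove_symm_apply]
      exact Fin.insertNth_last' x v
    rw [hes]
    by_cases hmem : (Fin.snoc v x : Fin (ν+1) → ℝ) ∈ simplexSet (ν+1) t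
    · have h2 : (x, v) ∈ E := by
        rw [hE]; exact ⟨(mem_simplexSet_snoc.1 hmem).1, (mem_simplexSet_snoc.1 hmem).2⟩
      rw [Set.indicator_of_mem hmem, Set.indicator_of_mem h2, hF, hH]
      simp [Fin.init_snoc, Fin.snoc_last]
    · have h2 : (x, v) ∉ E := by
        rw [hE]; intro hc; exact hmem (mem_simplexSet_snoc.2 ⟨hc.1, hc.2⟩)
      rw [Set.indicator_of_notMem hmem, Set.indicator_of_notMem h2]
  have hInt : Integrable ((simplexSet (ν+1) t).indicator F) := by
    rw [integrable_indicator_iff (measurableSet_simplexSet _ t)]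
    exact integrableOn_simplexSet hFmeas hFbd t
  have hInt2 : Integrable (E.indicator H) ((volume : Measure ℝ).prod volume) := by
    have heq : E.indicator H = fun p => (simplexSet (ν+1) t).indicator F (e.symm p) :=
      funext fun p => (hsymm p).symm
    rw [heq]
    exact ((mp'.symm e).integrable_comp_emb (MeasurableEquiv.measurableEmbedding _)).2 hInt
  calc ∫ u in simplexSet (ν+1) t, F u
      = ∫ u, (simplexSet (ν+1) t).indicator F u := by
        rw [integral_indicator (measurableSet_simplexSet _ t)]
    _ = ∫ p, (simplexSet (ν+1) t).indicator F (e.symm p)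
          ∂((volume : Measure ℝ).prod volume) := by
        exact (((mp'.symm e)).integral_comp (MeasurableEquiv.measurableEmbedding _) _).symm
    _ = ∫ p, E.indicator H p ∂((volume : Measure ℝ).prod volume) :=
        integral_congr_ae (Filter.Eventually.of_forall hsymm)
    _ = ∫ x, ∫ v, E.indicator H (x, v) := integral_prod _ hInt2
    _ = ∫ x, (Set.Icc (0:ℝ) t).indicator (fun x => (∫ v in simplexSet ν x, G v) * g x) x := by
        congr 1
        funext x
        by_cases hx : x ∈ Set.Icc (0:ℝ) t
        · have : (fun v => E.indicator H (x, v))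
              = (simplexSet ν x).indicator (fun v => G v * g x) := by
            funext v
            by_cases hv : v ∈ simplexSet ν x
            · rw [Set.indicator_of_mem (by exact ⟨hv, hx⟩ : (x,v) ∈ E),
                Set.indicator_of_mem hv]
            · rw [Set.indicator_of_notMem (fun hc => hv hc.1),
                Set.indicator_of_notMem hv]
          rw [this, integral_indicator (measurableSet_simplexSet ν x),
            Set.indicator_of_mem hx, integral_mul_const]
        · have : (fun v => E.indicator H (x, v)) = fun _ => (0:ℝ) := by
            funext v
            exact Set.indicator_of_notMem (fun hc => hx hc.2) _
          rw [this, Set.indicator_of_notMem hx, integral_zero]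
    _ = ∫ s in (0:ℝ)..t, (∫ v in simplexSet ν s, G v) * g s := by
        rw [integral_indicator measurableSet_Icc, intervalIntegral.integral_of_le ht,
          ← integral_Icc_eq_integral_Ioc]

lemma swap_triangle {g : ℝ → ℝ} (hg : Measurable g) (hb : ∀ s, |g s| ≤ 1)
    (k : ℕ) {t : ℝ} (ht : 0 ≤ t) :
    ∫ u in (0:ℝ)..t, u^k * (∫ s in (0:ℝ)..u, g s) =
      ∫ s in (0:ℝ)..t, (∫ u in s..t, (u:ℝ)^k) * g s := by
  set D : Set (ℝ × ℝ) := {p | p.1 ∈ Set.Icc 0 t ∧ p.2 ∈ Set.Icc p.1 t} with hD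
  set H : ℝ × ℝ → ℝ := fun p => p.2^k * g p.1 with hH
  have hDmeas : MeasurableSet D := by
    have hDeq : D = {p : ℝ × ℝ | 0 ≤ p.1} ∩ ({p : ℝ × ℝ | p.1 ≤ t} ∩
        ({p : ℝ × ℝ | p.1 ≤ p.2} ∩ {p : ℝ × ℝ | p.2 ≤ t})) := by
      ext p; simp only [hD, Set.mem_setOf_eq, Set.mem_Icc, Set.mem_inter_iff]; tauto
    rw [hDeq]
    exact (measurableSet_le measurable_const measurable_fst).inter
      ((measurableSet_le measurable_fst measurable_const).inter
       ((measurableSet_le measurable_fst measurable_snd).inter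
        (measurableSet_le measurable_snd measurable_const)))
  have hHmeas : Measurable H := (measurable_snd.pow_const k).mul (hg.comp measurable_fst)
  have hInt : Integrable (D.indicator H) ((volume : Measure ℝ).prod volume) := by
    rw [integrable_indicator_iff hDmeas]
    refine Measure.integrableOn_of_bounded (M := t^k) ?_ hHmeas.aestronglyMeasurable ?_
    · refine (lt_of_le_of_lt (measure_mono (show D ⊆ Set.Icc 0 t ×ˢ Set.Icc 0 t by
        rintro ⟨s, u⟩ ⟨⟨h1, h2⟩, ⟨h3, h4⟩⟩
        exact ⟨⟨h1, h2⟩, ⟨h1.trans h3, h4⟩⟩)) ?_).ne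
      rw [Measure.prod_prod]
      exact ENNReal.mul_lt_top measure_Icc_lt_top measure_Icc_lt_top
    · rw [ae_restrict_iff' hDmeas]
      refine Filter.Eventually.of_forall ?_
      rintro ⟨s, u⟩ ⟨⟨h1, h2⟩, ⟨h3, h4⟩⟩
      have hu0 : (0:ℝ) ≤ u := h1.trans h3
      calc ‖u^k * g s‖ = |u|^k * |g s| := by rw [Real.norm_eq_abs, abs_mul, abs_pow]
        _ ≤ t^k * 1 := by
            apply mul_le_mul _ (hb s) (abs_nonneg _) (pow_nonneg ht k)
            exact pow_le_pow_left₀ (abs_nonneg u) (by rwa [abs_of_nonneg hu0]) k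
        _ = t^k := mul_one _
  have swap := integral_integral_swap (f := fun s u => D.indicator H (s, u))
    (μ := (volume : Measure ℝ)) (ν := (volume : Measure ℝ)) hInt
  -- compute LHS of swap : ∫ s, ∫ u, ind (s,u) du ds
  have hLHS : (∫ s, ∫ u, D.indicator H (s, u)) =
      ∫ s in (0:ℝ)..t, (∫ u in s..t, (u:ℝ)^k) * g s := by
    have h1 : ∀ s : ℝ, (∫ u, D.indicator H (s, u)) =
        (Set.Icc (0:ℝ) t).indicator (fun s => (∫ u in s..t, (u:ℝ)^k) * g s) s := by
      intro s
      by_cases hs : s ∈ Set.Icc (0:ℝ) t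
      · have : (fun u => D.indicator H (s, u))
            = (Set.Icc s t).indicator (fun u => u^k * g s) := by
          funext u
          by_cases hu : u ∈ Set.Icc s t
          · rw [Set.indicator_of_mem (show (s,u) ∈ D from ⟨hs, hu⟩),
              Set.indicator_of_mem hu]
          · rw [Set.indicator_of_notMem (fun hc => hu hc.2),
              Set.indicator_of_notMem hu]
        rw [this, integral_indicator measurableSet_Icc, Set.indicator_of_mem hs,
          integral_mul_const, integral_Icc_eq_integral_Ioc,
          ← intervalIntegral.integral_of_le hs.2]
      · have : (fun u => D.indicator H (s, u)) = fun _ => (0:ℝ) := by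
          funext u
          exact Set.indicator_of_notMem (fun hc => hs hc.1) _
        rw [this, integral_zero, Set.indicator_of_notMem hs]
    simp_rw [h1]
    rw [integral_indicator measurableSet_Icc, integral_Icc_eq_integral_Ioc,
      ← intervalIntegral.integral_of_le ht]
  have hRHS : (∫ u, ∫ s, D.indicator H (s, u)) =
      ∫ u in (0:ℝ)..t, u^k * (∫ s in (0:ℝ)..u, g s) := by
    have h1 : ∀ u : ℝ, (∫ s, D.indicator H (s, u)) =
        (Set.Icc (0:ℝ) t).indicator (fun u => u^k * (∫ s in (0:ℝ)..u, g s)) u := by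
      intro u
      by_cases hu : u ∈ Set.Icc (0:ℝ) t
      · have : (fun s => D.indicator H (s, u))
            = (Set.Icc (0:ℝ) u).indicator (fun s => u^k * g s) := by
          funext s
          by_cases hs : s ∈ Set.Icc (0:ℝ) u
          · rw [Set.indicator_of_mem (show (s,u) ∈ D from
              ⟨⟨hs.1, hs.2.trans hu.2⟩, ⟨hs.2, hu.2⟩⟩), Set.indicator_of_mem hs]
          · refine (Set.indicator_of_notMem ?_ _).trans
              (Set.indicator_of_notMem hs _).symm
            rintro ⟨⟨h1', _⟩, ⟨h3, _⟩⟩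
            exact hs ⟨h1', h3⟩
        rw [this, integral_indicator measurableSet_Icc, Set.indicator_of_mem hu,
          integral_Icc_eq_integral_Ioc, ← intervalIntegral.integral_of_le hu.1,
          ← intervalIntegral.integral_const_mul]
      · have : (fun s => D.indicator H (s, u)) = fun _ => (0:ℝ) := by
          funext s
          refine Set.indicator_of_notMem ?_ _
          rintro ⟨⟨h1', _⟩, ⟨_, h4⟩⟩
          exact hu ⟨h1'.trans ‹s ≤ u›, h4⟩
        rw [this, integral_zero, Set.indicator_of_notMem hu]
    simp_rw [h1]
    rw [integral_indicator measurableSet_Icc, integral_Icc_eq_integral_Ioc,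
      ← intervalIntegral.integral_of_le ht]
  rw [← hLHS, ← hRHS, swap]

lemma intervalIntegrable_of_bounded_on {f : ℝ → ℝ} (hf : Measurable f) {B : ℝ} {a b : ℝ}
    (hab : a ≤ b) (hB : ∀ s ∈ Set.Ioc a b, |f s| ≤ B) :
    IntervalIntegrable f volume a b := by
  rw [intervalIntegrable_iff_integrableOn_Ioc_of_le hab]
  refine Measure.integrableOn_of_bounded (M := B) measure_Ioc_lt_top.ne
    hf.aestronglyMeasurable ?_
  rw [ae_restrict_iff' measurableSet_Ioc]
  exact Filter.Eventually.of_forall fun s hs => by simpa using hB s hs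

lemma ibp_pow {g : ℝ → ℝ} (hg : Measurable g) (hb : ∀ s, |g s| ≤ 1) (k : ℕ) {t : ℝ}
    (ht : 0 ≤ t) :
    ∫ s in (0:ℝ)..t, s^(k+1) * g s
      = t^(k+1) * (∫ s in (0:ℝ)..t, g s)
        - ((k:ℝ)+1) * ∫ u in (0:ℝ)..t, u^k * (∫ s in (0:ℝ)..u, g s) := by
  have h1 := swap_triangle hg hb k ht
  have hk1 : ((k:ℝ)+1) ≠ 0 := by positivity
  have h2 : (fun s => (∫ u in s..t, (u:ℝ)^k) * g s)
      = fun s => ((t^(k+1) - s^(k+1))/((k:ℝ)+1)) * g s := by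
    funext s
    rw [integral_pow]
  rw [h2] at h1
  have hgInt : IntervalIntegrable g volume 0 t :=
    intervalIntegrable_of_bounded_on hg ht (fun s _ => hb s)
  have hpowInt : IntervalIntegrable (fun s => s^(k+1) * g s) volume 0 t := by
    refine intervalIntegrable_of_bounded_on (by measurability) (B := t^(k+1)) ht ?_
    intro s hs
    rw [abs_mul, abs_pow]
    calc |s|^(k+1) * |g s| ≤ t^(k+1) * 1 := by
          refine mul_le_mul ?_ (hb s) (abs_nonneg _) (pow_nonneg ht _)
          exact pow_le_pow_left₀ (abs_nonneg s) (by rw [abs_of_nonneg hs.1.le]; exact hs.2) _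
      _ = t^(k+1) := mul_one _
  have h3 : ∫ s in (0:ℝ)..t, ((t^(k+1) - s^(k+1))/((k:ℝ)+1)) * g s
      = (t^(k+1) * (∫ s in (0:ℝ)..t, g s) - ∫ s in (0:ℝ)..t, s^(k+1) * g s) / ((k:ℝ)+1) := by
    have : (fun s => ((t^(k+1) - s^(k+1))/((k:ℝ)+1)) * g s)
        = fun s => (((k:ℝ)+1)⁻¹) * (t^(k+1) * g s - s^(k+1) * g s) := by
      funext s; field_simp
    rw [this, intervalIntegral.integral_const_mul,
      intervalIntegral.integral_sub (hgInt.const_mul _) hpowInt,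
      intervalIntegral.integral_const_mul]
    field_simp
  rw [h3] at h1
  have := congrArg (fun x => ((k:ℝ)+1) * x) h1
  rw [mul_div_cancel₀ _ hk1] at this
  linarith [this]

/-- The inductive property at level `ν` with constant `C`. -/
def KeyProp (d : ℕ) (T : ℝ) (ν : ℕ) (C : ℝ) : Prop :=
  ∀ (f : ℝ → Fin d → ℝ), Measurable f → (∀ s k, |f s k| ≤ 1) →
  ∀ (Q : Fin d → ℝ), (∀ k, |Q k| ≤ 1) →
  ∀ δ : ℝ, 0 ≤ δ →
    (∀ t ∈ Set.Icc (0:ℝ) T, ∀ k, |(∫ s in (0:ℝ)..t, f s k) - t * Q k| ≤ δ) →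
  ∀ t ∈ Set.Icc (0:ℝ) T, ∀ i : Fin ν → Fin d,
    |(∫ u in simplexSet ν t, ∏ j, f (u j) (i j))
      - t^ν / (Nat.factorial ν) * ∏ j, Q (i j)| ≤ C * δ

lemma key_base (d : ℕ) {T : ℝ} (hT : 0 < T) : KeyProp d T 1 1 := by
  intro f hf hfb Q hQ δ hδ hLLN t ht i
  have h1 : (fun u : Fin 1 → ℝ => ∏ j, f (u j) (i j)) = fun u => f (u 0) (i 0) := by
    funext u; rw [Fin.prod_univ_one]
  rw [show (∫ u in simplexSet 1 t, ∏ j, f (u j) (i j)) = ∫ u in simplexSet 1 t, f (u 0) (i 0)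
      from by rw [h1], integral_simplexSet_one (fun s => f s (i 0)) ht.1]
  have h2 : t^1 / (Nat.factorial 1 : ℝ) * ∏ j, Q (i j) = t * Q (i 0) := by
    rw [Fin.prod_univ_one]; simp [Nat.factorial]
  rw [h2, one_mul]
  exact hLLN t ht (i 0)

lemma key_step (d : ℕ) {T : ℝ} (hT : 0 < T) (m : ℕ) (C : ℝ) (hC : 0 ≤ C)
    (IH : KeyProp d T (m+1) C) :
    KeyProp d T (m+2) (T * C + ((m:ℝ)+2) * (max T 1)^(m+1)) := by
  intro f hf hfb Q hQ δ hδ hLLN t ht i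
  set n := m + 1 with hn
  set Tm := max T 1 with hTm
  have hTm1 : (1:ℝ) ≤ Tm := le_max_right _ _
  have hTm0 : (0:ℝ) ≤ Tm := le_trans zero_le_one hTm1
  have hTTm : T ≤ Tm := le_max_left _ _
  have htT : t ≤ T := ht.2
  have ht0 : 0 ≤ t := ht.1
  -- coordinate functions
  set G : (Fin n → ℝ) → ℝ := fun v => ∏ j, f (v j) (i j.castSucc) with hG
  set g : ℝ → ℝ := fun s => f s (i (Fin.last n)) with hg
  have hfk : ∀ k : Fin d, Measurable fun s => f s k := fun k =>
    (measurable_pi_apply k).comp hf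
  have hGmeas : Measurable G := by
    apply Finset.measurable_prod
    intro j _
    exact (hfk (i j.castSucc)).comp (measurable_pi_apply j)
  have hgmeas : Measurable g := hfk _
  have hGbd : ∀ v, |G v| ≤ 1 := by
    intro v
    rw [hG, Finset.abs_prod]
    apply Finset.prod_le_one (fun j _ => abs_nonneg _) (fun j _ => hfb _ _)
  have hgbd : ∀ s, |g s| ≤ 1 := fun s => hfb _ _
  -- slice
  have key0 : (∫ u in simplexSet (n+1) t, ∏ j, f (u j) (i j))
      = ∫ s in (0:ℝ)..t, (∫ v in simplexSet n s, G v) * g s := by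
    rw [show (fun u : Fin (n+1) → ℝ => ∏ j, f (u j) (i j))
        = fun u => G (Fin.init u) * g (u (Fin.last n)) from funext fun u => by
          rw [Fin.prod_univ_castSucc]; rfl]
    exact slice_simplex hGmeas hgmeas hGbd hgbd ht0
  set h : ℝ → ℝ := fun s => ∫ v in simplexSet n s, G v with hh
  set Pq : ℝ := ∏ j : Fin n, Q (i j.castSucc) with hPq
  set Qk : ℝ := Q (i (Fin.last n)) with hQk
  have hPqbd : |Pq| ≤ 1 := by
    rw [hPq, Finset.abs_prod]
    apply Finset.prod_le_one (fun j _ => abs_nonneg _) (fun j _ => hQ _)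
  have hQkbd : |Qk| ≤ 1 := hQ _
  have hfact : (1:ℝ) ≤ (Nat.factorial n : ℝ) := by
    exact_mod_cast Nat.one_le_iff_ne_zero.2 (Nat.factorial_ne_zero n)
  have hfact0 : (0:ℝ) < (Nat.factorial n : ℝ) := lt_of_lt_of_le zero_lt_one hfact
  set p : ℝ → ℝ := fun s => s^n / (Nat.factorial n) * Pq with hp
  have hIH : ∀ s ∈ Set.Icc (0:ℝ) T, |h s - p s| ≤ C * δ := by
    intro s hs
    exact IH f hf hfb Q hQ δ hδ hLLN s hs (fun j => i j.castSucc)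
  have hhmeas : Measurable h := (stronglyMeasurable_simplexIntegral hGmeas).measurable
  have hpcont : Continuous p := by fun_prop
  -- powers bounded
  have hpow : ∀ (s : ℝ), s ∈ Set.Icc (0:ℝ) T → ∀ k : ℕ, k ≤ n → s^k ≤ Tm^n := by
    intro s hs k hk
    calc s^k ≤ Tm^k := pow_le_pow_left₀ hs.1 (hs.2.trans hTTm) k
      _ ≤ Tm^n := pow_le_pow_right₀ hTm1 hk
  have hpbd : ∀ s ∈ Set.Icc (0:ℝ) T, |p s| ≤ Tm^n := by
    intro s hs
    rw [hp, abs_mul, abs_div, abs_pow, abs_of_nonneg hs.1, abs_of_nonneg hfact0.le]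
    calc s^n / (Nat.factorial n) * |Pq| ≤ s^n / 1 * 1 := by
          apply mul_le_mul _ hPqbd (abs_nonneg _) _
          · apply div_le_div_of_nonneg_left (pow_nonneg hs.1 n) zero_lt_one hfact
          · exact div_nonneg (pow_nonneg hs.1 n) zero_le_one
      _ = s^n := by ring
      _ ≤ Tm^n := hpow s hs n le_rfl
  -- split the integral
  have hsub : Set.Ioc (0:ℝ) t ⊆ Set.Icc (0:ℝ) T := fun s hs =>
    ⟨hs.1.le, hs.2.trans htT⟩
  have hint1 : IntervalIntegrable (fun s => (h s - p s) * g s) volume 0 t := by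
    refine intervalIntegrable_of_bounded_on
      (((hhmeas.sub hpcont.measurable)).mul hgmeas) (B := C * δ) ht0 ?_
    intro s hs
    rw [Pi.mul_apply, abs_mul]
    calc |h s - p s| * |g s| ≤ (C * δ) * 1 :=
          mul_le_mul (hIH s (hsub hs)) (hgbd s) (abs_nonneg _) (by positivity)
      _ = C * δ := mul_one _
  have hint2 : IntervalIntegrable (fun s => p s * g s) volume 0 t := by
    refine intervalIntegrable_of_bounded_on (hpcont.measurable.mul hgmeas)
      (B := Tm^n) ht0 ?_
    intro s hs
    rw [Pi.mul_apply, abs_mul]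
    calc |p s| * |g s| ≤ Tm^n * 1 :=
          mul_le_mul (hpbd s (hsub hs)) (hgbd s) (abs_nonneg _) (pow_nonneg hTm0 n)
      _ = Tm^n := mul_one _
  have hsplit : (∫ s in (0:ℝ)..t, h s * g s)
      = (∫ s in (0:ℝ)..t, (h s - p s) * g s) + ∫ s in (0:ℝ)..t, p s * g s := by
    rw [← intervalIntegral.integral_add hint1 hint2]
    congr 1; funext s; ring
  set E0 : ℝ := ∫ s in (0:ℝ)..t, (h s - p s) * g s with hE0
  have hE0bd : |E0| ≤ C * δ * T := by
    have := intervalIntegral.norm_integral_le_of_norm_le_const (C := C * δ)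
      (f := fun s => (h s - p s) * g s) (a := 0) (b := t) ?_
    · rw [hE0]
      calc |∫ s in (0:ℝ)..t, (h s - p s) * g s| ≤ C * δ * |t - 0| := this
        _ ≤ C * δ * T := by
            rw [sub_zero, abs_of_nonneg ht0]
            exact mul_le_mul_of_nonneg_left htT (by positivity)
    · intro s hs
      rw [Set.uIoc_of_le ht0] at hs
      rw [Real.norm_eq_abs, abs_mul]
      calc |h s - p s| * |g s| ≤ (C * δ) * 1 :=
            mul_le_mul (hIH s (hsub hs)) (hgbd s) (abs_nonneg _) (by positivity)
        _ = C * δ := mul_one _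
  -- p * g part
  have hpg : (∫ s in (0:ℝ)..t, p s * g s)
      = Pq / (Nat.factorial n) * ∫ s in (0:ℝ)..t, s^n * g s := by
    rw [← intervalIntegral.integral_const_mul]
    congr 1; funext s; rw [hp]; ring
  -- integration by parts
  set Φ : ℝ → ℝ := fun u => ∫ s in (0:ℝ)..u, g s with hΦ
  have hgii : ∀ a b : ℝ, IntervalIntegrable g volume a b := by
    intro a b
    rcases le_total a b with hab | hab
    · exact intervalIntegrable_of_bounded_on hgmeas (B := 1) hab (fun s _ => hgbd s)
    · exact (intervalIntegrable_of_bounded_on hgmeas (B := 1) hab (fun s _ => hgbd s)).symm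
  have hΦcont : Continuous Φ := intervalIntegral.continuous_primitive hgii 0
  have hΦbd : ∀ u ∈ Set.Icc (0:ℝ) T, |Φ u - u * Qk| ≤ δ := fun u hu => hLLN u hu _
  -- ibp at exponent n = m+1
  have hibp : (∫ s in (0:ℝ)..t, s^n * g s)
      = t^n * Φ t - ((m:ℝ)+1) * ∫ u in (0:ℝ)..t, u^m * Φ u := by
    exact ibp_pow hgmeas hgbd m ht0
  -- split the inner integral
  set E2 : ℝ := ∫ u in (0:ℝ)..t, u^m * (Φ u - u * Qk) with hE2
  have hsplit2 : (∫ u in (0:ℝ)..t, u^m * Φ u)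
      = Qk * (t^(m+2) / ((m:ℝ)+2)) + E2 := by
    have hi1 : IntervalIntegrable (fun u => u^(m+1) * Qk) volume 0 t :=
      (Continuous.intervalIntegrable (by fun_prop) _ _)
    have hi2 : IntervalIntegrable (fun u => u^m * (Φ u - u * Qk)) volume 0 t :=
      (Continuous.intervalIntegrable (by fun_prop) _ _)
    have : (fun u => u^m * Φ u) = fun u => u^(m+1) * Qk + u^m * (Φ u - u * Qk) := by
      funext u; ring
    rw [this, intervalIntegral.integral_add hi1 hi2, hE2]
    congr 1
    rw [intervalIntegral.integral_mul_const, integral_pow]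
    push_cast
    ring
  have hE2bd : |E2| ≤ Tm^m * δ * T := by
    have := intervalIntegral.norm_integral_le_of_norm_le_const (C := Tm^m * δ)
      (f := fun u => u^m * (Φ u - u * Qk)) (a := 0) (b := t) ?_
    · rw [hE2]
      calc |∫ u in (0:ℝ)..t, u^m * (Φ u - u * Qk)| ≤ Tm^m * δ * |t - 0| := this
        _ ≤ Tm^m * δ * T := by
            rw [sub_zero, abs_of_nonneg ht0]
            exact mul_le_mul_of_nonneg_left htT (by positivity)
    · intro u hu
      rw [Set.uIoc_of_le ht0] at hu
      rw [Real.norm_eq_abs, abs_mul, abs_pow]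
      refine mul_le_mul ?_ (hΦbd u (hsub hu)) (abs_nonneg _) (by positivity)
      rw [abs_of_nonneg hu.1.le]
      exact pow_le_pow_left₀ hu.1.le ((hsub hu).2.trans hTTm) m
  set E1 : ℝ := Φ t - t * Qk with hE1
  have hE1bd : |E1| ≤ δ := hΦbd t ht
  -- assemble the exact error formula
  have hQprod : (∏ j : Fin (n+1), Q (i j)) = Pq * Qk := by
    rw [Fin.prod_univ_castSucc]
  have hfactsucc : (Nat.factorial (n+1) : ℝ) = ((n:ℝ)+1) * (Nat.factorial n : ℝ) := by
    rw [Nat.factorial_succ]; push_cast; ring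
  have hfinal : (∫ u in simplexSet (n+1) t, ∏ j, f (u j) (i j))
      - t^(n+1) / (Nat.factorial (n+1)) * ∏ j : Fin (n+1), Q (i j)
      = E0 + Pq / (Nat.factorial n) * (t^n * E1 - ((m:ℝ)+1) * E2) := by
    rw [key0, hsplit, hpg, hibp, hsplit2, hQprod, hfactsucc, hE0, hE1]
    have hnm : (n:ℝ) = (m:ℝ) + 1 := by rw [hn]; push_cast; ring
    have htn : t^(n+1) = t^(m+2) := by rw [hn]
    rw [htn, hnm]
    field_simp
    ring
  rw [hfinal]
  -- final bound
  have habs : |E0 + Pq / (Nat.factorial n) * (t^n * E1 - ((m:ℝ)+1) * E2)|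
      ≤ |E0| + |Pq| / (Nat.factorial n) * (t^n * |E1| + ((m:ℝ)+1) * |E2|) := by
    calc |E0 + Pq / (Nat.factorial n) * (t^n * E1 - ((m:ℝ)+1) * E2)|
        ≤ |E0| + |Pq / (Nat.factorial n) * (t^n * E1 - ((m:ℝ)+1) * E2)| := abs_add_le _ _
      _ ≤ |E0| + |Pq| / (Nat.factorial n) * (t^n * |E1| + ((m:ℝ)+1) * |E2|) := by
          rw [abs_mul, abs_div, abs_of_nonneg hfact0.le]
          refine add_le_add_right (mul_le_mul_of_nonneg_left ?_
            (div_nonneg (abs_nonneg _) hfact0.le)) _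
          calc |t^n * E1 - ((m:ℝ)+1) * E2|
              ≤ |t^n * E1| + |((m:ℝ)+1) * E2| := abs_sub _ _
            _ = t^n * |E1| + ((m:ℝ)+1) * |E2| := by
                rw [abs_mul, abs_mul, abs_pow, abs_of_nonneg ht0,
                  abs_of_nonneg (by positivity : (0:ℝ) ≤ (m:ℝ)+1)]
  refine habs.trans ?_
  have hb1 : |Pq| / (Nat.factorial n) ≤ 1 := by
    rw [div_le_one hfact0]
    exact hPqbd.trans hfact
  have htn : t^n ≤ Tm^n := hpow t ht n le_rfl
  have hTm_pow_nonneg : (0:ℝ) ≤ Tm^n := pow_nonneg hTm0 n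
  have hTmm : Tm^m * T ≤ Tm^n := by
    rw [hn, pow_succ]
    calc Tm^m * T ≤ Tm^m * Tm := mul_le_mul_of_nonneg_left hTTm (pow_nonneg hTm0 m)
      _ = Tm^m * Tm := rfl
  have hstep1 : t^n * |E1| + ((m:ℝ)+1) * |E2| ≤ Tm^n * δ + ((m:ℝ)+1) * (Tm^n * δ) := by
    refine add_le_add ?_ ?_
    · exact mul_le_mul htn hE1bd (abs_nonneg _) hTm_pow_nonneg
    · refine mul_le_mul_of_nonneg_left ?_ (by positivity)
      refine hE2bd.trans ?_
      calc Tm^m * δ * T = Tm^m * T * δ := by ring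
        _ ≤ Tm^n * δ := mul_le_mul_of_nonneg_right hTmm hδ
  calc |E0| + |Pq| / (Nat.factorial n) * (t^n * |E1| + ((m:ℝ)+1) * |E2|)
      ≤ C * δ * T + 1 * (Tm^n * δ + ((m:ℝ)+1) * (Tm^n * δ)) := by
        refine add_le_add hE0bd ?_
        refine mul_le_mul hb1 hstep1 ?_ zero_le_one
        positivity
    _ = (T * C + ((m:ℝ)+2) * Tm^n) * δ := by ring
    _ = (T * C + ((m:ℝ)+2) * Tm^(m+1)) * δ := by rw [hn]

lemma key_bound (d : ℕ) {T : ℝ} (hT : 0 < T) (ν : ℕ) (hν : 1 ≤ ν) :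
    ∃ C : ℝ, 0 ≤ C ∧ KeyProp d T ν C := by
  induction ν, hν using Nat.le_induction with
  | base => exact ⟨1, zero_le_one, key_base d hT⟩
  | succ n hn IH =>
    obtain ⟨C, hC, hK⟩ := IH
    obtain ⟨m, rfl⟩ : ∃ m, n = m + 1 := ⟨n - 1, by omega⟩
    refine ⟨T * C + ((m:ℝ)+2) * (max T 1)^(m+1), ?_, key_step d hT m C hC hK⟩
    have h1 : (0:ℝ) ≤ max T 1 := le_trans zero_le_one (le_max_right _ _)
    positivity

-- scaling lemma
lemma smul_simplexSet {ν : ℕ} {c : ℝ} (hc : 0 < c) (r : ℝ) :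
    c • simplexSet ν r = simplexSet ν (r * c) := by
  ext x
  rw [Set.mem_smul_set_iff_inv_smul_mem₀ hc.ne']
  constructor
  · rintro ⟨h1, h2, h3⟩
    refine ⟨fun j => ?_, fun a b hab => ?_, fun j => ?_⟩
    · have := h1 j
      simpa using (mul_le_mul_of_nonneg_left this hc.le).trans_eq (by simp [hc.ne'])
    · have := h2 hab
      simp only [Pi.smul_apply, smul_eq_mul] at this
      calc x a = c * (c⁻¹ * x a) := by field_simp
        _ ≤ c * (c⁻¹ * x b) := mul_le_mul_of_nonneg_left this hc.le
        _ = x b := by field_simp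
    · have := h3 j
      simp only [Pi.smul_apply, smul_eq_mul] at this
      calc x j = c * (c⁻¹ * x j) := by field_simp
        _ ≤ c * r := mul_le_mul_of_nonneg_left this hc.le
        _ = r * c := mul_comm _ _
  · rintro ⟨h1, h2, h3⟩
    refine ⟨fun j => ?_, fun a b hab => ?_, fun j => ?_⟩
    · simp only [Pi.smul_apply, smul_eq_mul]
      exact mul_nonneg (inv_nonneg.2 hc.le) (h1 j)
    · simp only [Pi.smul_apply, smul_eq_mul]
      exact mul_le_mul_of_nonneg_left (h2 hab) (inv_nonneg.2 hc.le)
    · simp only [Pi.smul_apply, smul_eq_mul]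
      calc c⁻¹ * x j ≤ c⁻¹ * (r * c) := mul_le_mul_of_nonneg_left (h3 j) (inv_nonneg.2 hc.le)
        _ = r := by field_simp
lemma scale_simplex {ν : ℕ} (F : (Fin ν → ℝ) → ℝ) {c : ℝ} (hc : 0 < c) (r : ℝ) :
    ((c:ℝ)^ν)⁻¹ * ∫ s in simplexSet ν (r * c), F s = ∫ u in simplexSet ν r, F (c • u) := by
  rw [Measure.setIntegral_comp_smul_of_pos volume F (simplexSet ν r) hc, smul_simplexSet hc r,
    Module.finrank_fin_fun, smul_eq_mul]

lemma intervalIntegrable_of_bounded_pi {d : ℕ} {f : ℝ → Fin d → ℝ} (hf : Measurable f)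
    {B : ℝ} (hB : ∀ s, ‖f s‖ ≤ B) (a b : ℝ) : IntervalIntegrable f volume a b := by
  rw [intervalIntegrable_iff]
  refine Measure.integrableOn_of_bounded (M := B) measure_Ioc_lt_top.ne
    hf.aestronglyMeasurable ?_
  exact Filter.Eventually.of_forall fun s => hB s


/-- law of large numbers for iterated integrals: if
`φ_n(t) = n⁻¹ ∫_0^{tn} ξ(u) du` converges a.s. uniformly on `[0,T]` to `tQ`, then
for every `ν ≥ 1` the iterated integrals
`𝕊_n^{(ν)}(t) = n^{-ν} ∫_{0≤s_1≤⋯≤s_ν≤tn} ξ(s_1)⊗⋯⊗ξ(s_ν) ds` converge a.s.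
uniformly on `[0,T]` to `(t^ν/ν!) Q^{⊗ν}`. -/
theorem lln_iterated_integrals {Ω : Type} [MeasurableSpace Ω] (P : Measure Ω)
    [IsProbabilityMeasure P]
    (d ν : ℕ) (hν : 1 ≤ ν) (T : ℝ) (hT : 0 < T)
    (ξ : ℝ → Ω → Fin d → ℝ)
    (hmeas : Measurable (Function.uncurry ξ))
    (hbound : ∀ᵐ ω ∂P, ∀ t : ℝ, ‖ξ t ω‖ ≤ 1)
    (Q : Fin d → ℝ)
    (hLLN : ∀ᵐ ω ∂P, Tendsto (fun n : ℕ =>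
        ⨆ t : Set.Icc (0:ℝ) T,
          ‖((n:ℝ)⁻¹ • ∫ u in (0:ℝ)..((t:ℝ) * n), ξ u ω) - (t:ℝ) • Q‖)
        atTop (nhds 0)) :
    ∀ᵐ ω ∂P, Tendsto (fun n : ℕ =>
        ⨆ t : Set.Icc (0:ℝ) T,
          ‖(fun i : Fin ν → Fin d =>
            ((n:ℝ) ^ ν)⁻¹ * (∫ s in simplexSet ν ((t:ℝ) * n), ∏ j, ξ (s j) ω (i j))
              - (t:ℝ) ^ ν / (Nat.factorial ν) * ∏ j, Q (i j))‖)
        atTop (nhds 0) := by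
  obtain ⟨C, hC0, hkey⟩ := key_bound d hT ν hν
  filter_upwards [hbound, hLLN] with ω hbω hLω
  set δn : ℕ → ℝ := fun n =>
    ⨆ t : Set.Icc (0:ℝ) T,
      ‖((n:ℝ)⁻¹ • ∫ u in (0:ℝ)..((t:ℝ) * n), ξ u ω) - (t:ℝ) • Q‖ with hδn
  have hξmeas : Measurable fun u => ξ u ω := hmeas.comp measurable_prodMk_right
  have hξbd : ∀ u k, |ξ u ω k| ≤ 1 := fun u k => by
    have := norm_le_pi_norm (ξ u ω) k
    rw [Real.norm_eq_abs] at this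
    exact this.trans (hbω u)
  have hii : ∀ a b : ℝ, IntervalIntegrable (fun u => ξ u ω) volume a b :=
    intervalIntegrable_of_bounded_pi hξmeas hbω
  have hcoord : ∀ (x : ℝ) (k : Fin d),
      (∫ u in (0:ℝ)..x, ξ u ω) k = ∫ u in (0:ℝ)..x, ξ u ω k := by
    intro x k
    exact ((ContinuousLinearMap.proj (R := ℝ) (φ := fun _ : Fin d => ℝ)
      k).intervalIntegral_comp_comm (hii 0 x)).symm
  -- norm bound for the primitive
  have hprim : ∀ (n : ℕ) (t : ℝ), 0 ≤ t → t ≤ T →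
      ‖(n:ℝ)⁻¹ • ∫ u in (0:ℝ)..(t * n), ξ u ω‖ ≤ T := by
    intro n t ht0 htT
    rw [norm_smul, Real.norm_eq_abs, abs_of_nonneg (by positivity : (0:ℝ) ≤ (n:ℝ)⁻¹)]
    have h1 : ‖∫ u in (0:ℝ)..(t * n), ξ u ω‖ ≤ 1 * |t * n - 0| :=
      intervalIntegral.norm_integral_le_of_norm_le_const fun u _ => hbω u
    calc (n:ℝ)⁻¹ * ‖∫ u in (0:ℝ)..(t * n), ξ u ω‖ ≤ (n:ℝ)⁻¹ * (t * n) := by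
          refine mul_le_mul_of_nonneg_left ?_ (by positivity)
          refine h1.trans_eq ?_
          rw [one_mul, sub_zero, abs_of_nonneg (by positivity)]
      _ ≤ T := by
          rcases Nat.eq_zero_or_pos n with hn | hn
          · simp [hn]; positivity
          · have : (0:ℝ) < n := by exact_mod_cast hn
            rw [show (n:ℝ)⁻¹ * (t * n) = t * ((n:ℝ)⁻¹ * n) by ring, inv_mul_cancel₀ this.ne',
              mul_one]
            exact htT
  have hbdd : ∀ n : ℕ, BddAbove (Set.range fun t : Set.Icc (0:ℝ) T =>
      ‖((n:ℝ)⁻¹ • ∫ u in (0:ℝ)..((t:ℝ) * n), ξ u ω) - (t:ℝ) • Q‖) := by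
    intro n
    refine ⟨T + T * ‖Q‖, ?_⟩
    rintro _ ⟨t, rfl⟩
    refine (norm_sub_le _ _).trans ?_
    refine add_le_add (hprim n t t.2.1 t.2.2) ?_
    rw [norm_smul, Real.norm_eq_abs, abs_of_nonneg t.2.1]
    exact mul_le_mul_of_nonneg_right t.2.2 (norm_nonneg _)
  have hpt : ∀ (n : ℕ), ∀ t ∈ Set.Icc (0:ℝ) T,
      ‖((n:ℝ)⁻¹ • ∫ u in (0:ℝ)..(t * n), ξ u ω) - t • Q‖ ≤ δn n := by
    intro n t ht
    exact le_ciSup (hbdd n) (⟨t, ht⟩ : Set.Icc (0:ℝ) T)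
  have hδ0 : ∀ n, 0 ≤ δn n := fun n => Real.iSup_nonneg fun t => norm_nonneg _
  have hptk : ∀ (n : ℕ), ∀ t ∈ Set.Icc (0:ℝ) T, ∀ k : Fin d,
      |(n:ℝ)⁻¹ * (∫ u in (0:ℝ)..(t * n), ξ u ω k) - t * Q k| ≤ δn n := by
    intro n t ht k
    have h1 : (n:ℝ)⁻¹ * (∫ u in (0:ℝ)..(t * n), ξ u ω k) - t * Q k
        = (((n:ℝ)⁻¹ • ∫ u in (0:ℝ)..(t * n), ξ u ω) - t • Q) k := by
      simp [hcoord (t * n) k]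
    rw [h1, ← Real.norm_eq_abs]
    exact (norm_le_pi_norm _ k).trans (hpt n t ht)
  -- Q is bounded by 1
  have hQbd : ∀ k : Fin d, |Q k| ≤ 1 := by
    intro k
    have hev : ∀ᶠ n : ℕ in atTop, T * |Q k| - T ≤ δn n := by
      filter_upwards [eventually_ge_atTop 1] with n hn
      have h1 := hptk n T ⟨hT.le, le_rfl⟩ k
      have h2 : |(n:ℝ)⁻¹ * ∫ u in (0:ℝ)..(T * n), ξ u ω k| ≤ T := by
        rw [← hcoord, abs_mul, abs_of_nonneg (by positivity : (0:ℝ) ≤ (n:ℝ)⁻¹)]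
        refine le_trans ?_ (hprim n T hT.le le_rfl)
        rw [norm_smul, Real.norm_eq_abs, abs_of_nonneg (by positivity : (0:ℝ) ≤ (n:ℝ)⁻¹)]
        refine mul_le_mul_of_nonneg_left ?_ (by positivity)
        rw [← Real.norm_eq_abs]
        exact norm_le_pi_norm _ k
      have h3 : |T * Q k| - T ≤ δn n := by
        have h5 : |T * Q k - (n:ℝ)⁻¹ * ∫ u in (0:ℝ)..(T * n), ξ u ω k| ≤ δn n := by
          rw [abs_sub_comm]; exact h1
        have h4 := (abs_sub_abs_le_abs_sub (T * Q k)
          ((n:ℝ)⁻¹ * ∫ u in (0:ℝ)..(T * n), ξ u ω k)).trans h5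
        linarith
      rwa [abs_mul, abs_of_nonneg hT.le] at h3
    have hle := ge_of_tendsto hLω hev
    nlinarith [abs_nonneg (Q k)]
  -- the rescaled process
  have hLLNf : ∀ n : ℕ, 1 ≤ n → ∀ t ∈ Set.Icc (0:ℝ) T, ∀ k : Fin d,
      |(∫ s in (0:ℝ)..t, ξ ((n:ℝ) * s) ω k) - t * Q k| ≤ δn n := by
    intro n hn t ht k
    have hc : ((n:ℝ)) ≠ 0 := by positivity
    have h1 : (∫ s in (0:ℝ)..t, ξ ((n:ℝ) * s) ω k)
        = (n:ℝ)⁻¹ * ∫ u in (0:ℝ)..(t * n), ξ u ω k := by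
      rw [intervalIntegral.integral_comp_mul_left (fun u => ξ u ω k) hc]
      rw [mul_zero, mul_comm (n:ℝ) t, smul_eq_mul]
    rw [h1]
    exact hptk n t ht k
  -- conclude
  have htend : Tendsto (fun n => C * δn n) atTop (nhds 0) := by
    have := hLω.const_mul C
    rwa [mul_zero] at this
  refine tendsto_of_tendsto_of_tendsto_of_le_of_le' tendsto_const_nhds htend ?_ ?_
  · exact Filter.Eventually.of_forall fun n => Real.iSup_nonneg fun t => norm_nonneg _
  · filter_upwards [eventually_ge_atTop 1] with n hn
    refine Real.iSup_le (fun t => ?_) (mul_nonneg hC0 (hδ0 n))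
    rw [pi_norm_le_iff_of_nonneg (mul_nonneg hC0 (hδ0 n))]
    intro i
    have hnpos : (0:ℝ) < (n:ℝ) := by
      have : (1:ℝ) ≤ (n:ℝ) := by exact_mod_cast hn
      linarith
    have hscale : ((n:ℝ) ^ ν)⁻¹ * (∫ s in simplexSet ν ((t:ℝ) * n), ∏ j, ξ (s j) ω (i j))
        = ∫ u in simplexSet ν (t:ℝ), ∏ j, ξ ((n:ℝ) * u j) ω (i j) := by
      have := scale_simplex (fun s => ∏ j, ξ (s j) ω (i j)) hnpos (t:ℝ)
      rw [this]
      simp only [Pi.smul_apply, smul_eq_mul]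
    rw [Real.norm_eq_abs, hscale]
    have hfmeas : Measurable fun u => ξ ((n:ℝ) * u) ω :=
      hξmeas.comp (measurable_const.mul measurable_id)
    have hfbd : ∀ s k, |ξ ((n:ℝ) * s) ω k| ≤ 1 := fun s k => hξbd _ k
    exact hkey (fun u => ξ ((n:ℝ) * u) ω) hfmeas hfbd Q hQbd (δn n) (hδ0 n)
      (hLLNf n hn) (t:ℝ) t.2 i
end
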